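/- arXiv:2405.17017 — 9 statements merged into one kernel-verified Lean document; each statement's English description precedes it below -/
import Mathlib

section
/- For all distributions μ, μ̃ on 𝒳 and all Q-tables Q, Q', one has max_{y∈𝒳} |𝒫₃(μ,Q,μ̃)(y) − 𝒫₃(μ,Q',μ̃)(y)| ≤ φ |𝒜| ‖Q − Q'‖∞, where |𝒜| is the cardinality of 𝒜. -/
open Finset

/-- A probability distribution on a finite set, viewed as a nonnegative
function summing to one. -/
def IsDist {X : Type*} [Fintype X] (μ : X → ℝ) : Prop :=
  (∀ x, 0 ≤ μ x) ∧ ∑ x, μ x = 1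

/-- The ℓ¹ distance `‖μ - μ'‖₁` between two functions on a finite set. -/
def l1Dist {X : Type*} [Fintype X] (μ μ' : X → ℝ) : ℝ := ∑ x, |μ x - μ' x|

/-- The softmin map with parameter `φ`. -/
noncomputable def softmin {A : Type*} [Fintype A] (φ : ℝ) (z : A → ℝ) (a : A) : ℝ :=
  Real.exp (-φ * z a) / ∑ a', Real.exp (-φ * z a')

/-- Sup norm `‖Q‖∞ = max_{(x,a)} |Q(x,a)|` of a Q-table. -/
noncomputable def supNorm {X A : Type*} [Fintype X] [Fintype A] [Nonempty X] [Nonempty A]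
    (Q : X → A → ℝ) : ℝ :=
  Finset.univ.sup' Finset.univ_nonempty (fun q : X × A => |Q q.1 q.2|)

/-- The operator `𝒫₃`. -/
noncomputable def P3 {X A : Type*} [Fintype X] [Fintype A]
    (φ : ℝ) (p : X → A → (X → ℝ) → (X → ℝ) → X → ℝ)
    (μ : X → ℝ) (Q : X → A → ℝ) (μt : X → ℝ) (y : X) : ℝ :=
  (∑ x', μ x' * ∑ a, softmin φ (Q x') a * p x' a μ μt y) - μ y

lemma softmin_lipschitz {A : Type*} [Fintype A] (φ : ℝ) (hφ : 0 < φ)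
    (z z' : A → ℝ) (M : ℝ) (hM : ∀ b, |z' b - z b| ≤ M) (a : A) :
    |softmin φ z' a - softmin φ z a| ≤ φ * M := by
  classical
  have hM0 : 0 ≤ M := le_trans (abs_nonneg _) (hM a)
  set d : A → ℝ := fun b => z' b - z b with hd
  set w : ℝ → A → ℝ := fun t b => Real.exp (-φ * (z b + t * d b)) with hw
  set S : ℝ → ℝ := fun t => ∑ b, w t b with hS
  have hwpos : ∀ t b, 0 < w t b := fun t b => Real.exp_pos _
  have hSpos : ∀ t, 0 < S t :=
    fun t => Finset.sum_pos (fun b _ => hwpos t b) (univ_nonempty_iff.2 ⟨a⟩)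
  set F : ℝ → ℝ := fun t => w t a / S t with hF
  set F' : ℝ → ℝ := fun t =>
    -φ * (∑ b, w t a * w t b * (d a - d b)) / (S t) ^ 2 with hF'
  have hderivw : ∀ t b, HasDerivAt (fun t => w t b) (w t b * (-φ * d b)) t := by
    intro t b
    have h1 : HasDerivAt (fun t : ℝ => -φ * (z b + t * d b)) (-φ * d b) t := by
      simpa using (((hasDerivAt_mul_const (d b)).const_add (z b)).const_mul (-φ))
    simpa [hw] using h1.exp
  have hderivS : ∀ t, HasDerivAt S (∑ b, w t b * (-φ * d b)) t :=
    fun t => HasDerivAt.fun_sum (fun b _ => hderivw t b)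
  have hnum : ∀ t, (∑ b, w t a * w t b * (d a - d b))
      = w t a * d a * S t - w t a * ∑ b, w t b * d b := by
    intro t
    have h1 : ∀ b : A, w t a * w t b * (d a - d b)
        = (w t a * d a) * w t b - w t a * (w t b * d b) := fun b => by ring
    rw [Finset.sum_congr rfl fun b _ => h1 b, Finset.sum_sub_distrib,
      ← Finset.mul_sum, ← Finset.mul_sum, hS]
  have hderivF : ∀ t, HasDerivAt F (F' t) t := by
    intro t
    have h : HasDerivAt F _ t := (hderivw t a).div (hderivS t) (ne_of_gt (hSpos t))
    convert h using 1
    have hsum : ∑ b, w t b * (-φ * d b) = -φ * ∑ b, w t b * d b := by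
      rw [Finset.mul_sum]
      exact Finset.sum_congr rfl fun b _ => by ring
    show (-φ * ∑ b, w t a * w t b * (d a - d b)) / (S t) ^ 2
        = (w t a * (-φ * d a) * S t - w t a * ∑ b, w t b * (-φ * d b)) / S t ^ 2
    rw [hnum t, hsum]
    ring
  have hbound : ∀ t, |F' t| ≤ φ * M := by
    intro t
    set N : ℝ := ∑ b, w t a * w t b * (d a - d b) with hN
    have h0 : N = ∑ b ∈ univ.erase a, w t a * w t b * (d a - d b) := by
      rw [hN, ← Finset.add_sum_erase univ _ (mem_univ a)]
      simp
    have hsub : ∑ b ∈ univ.erase a, w t b = S t - w t a := by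
      rw [Finset.sum_erase_eq_sub (mem_univ a)]
    have key1 : |N| ≤ 2 * M * (w t a * (S t - w t a)) := by
      rw [h0]
      calc |∑ b ∈ univ.erase a, w t a * w t b * (d a - d b)|
          ≤ ∑ b ∈ univ.erase a, |w t a * w t b * (d a - d b)| :=
            Finset.abs_sum_le_sum_abs _ _
        _ ≤ ∑ b ∈ univ.erase a, w t a * w t b * (2 * M) := by
            refine Finset.sum_le_sum fun b _ => ?_
            rw [abs_mul, abs_of_pos (mul_pos (hwpos t a) (hwpos t b))]
            have hdd : |d a - d b| ≤ 2 * M := by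
              have ha1 : -M ≤ d a ∧ d a ≤ M := abs_le.1 (hM a)
              have ha2 : -M ≤ d b ∧ d b ≤ M := abs_le.1 (hM b)
              rw [abs_le]
              constructor <;> linarith [ha1.1, ha1.2, ha2.1, ha2.2]
            exact mul_le_mul_of_nonneg_left hdd
              (le_of_lt (mul_pos (hwpos t a) (hwpos t b)))
        _ = ∑ b ∈ univ.erase a, (w t a * (2 * M)) * w t b :=
            Finset.sum_congr rfl fun b _ => by ring
        _ = (w t a * (2 * M)) * ∑ b ∈ univ.erase a, w t b := by
            rw [Finset.mul_sum]
        _ = 2 * M * (w t a * (S t - w t a)) := by rw [hsub]; ring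
    have key2 : w t a * (S t - w t a) ≤ (S t) ^ 2 / 4 := by
      nlinarith [sq_nonneg (S t - 2 * w t a)]
    have habs : |F' t| = φ * |N| / (S t) ^ 2 := by
      show |(-φ * N) / (S t) ^ 2| = φ * |N| / (S t) ^ 2
      rw [abs_div, abs_mul, abs_neg, abs_of_pos hφ,
        abs_of_pos (pow_pos (hSpos t) 2)]
    have h25 : 2 * M * (w t a * (S t - w t a)) ≤ 2 * M * ((S t) ^ 2 / 4) :=
      mul_le_mul_of_nonneg_left key2 (by linarith)
    have h3 : |N| ≤ M * (S t) ^ 2 := by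
      have h26 : 0 ≤ M * (S t) ^ 2 := by positivity
      linarith
    rw [habs, div_le_iff₀ (pow_pos (hSpos t) 2)]
    calc φ * |N| ≤ φ * (M * (S t) ^ 2) := mul_le_mul_of_nonneg_left h3 hφ.le
      _ = φ * M * (S t) ^ 2 := by ring
  have hF0 : F 0 = softmin φ z a := by
    simp [hF, hw, hS, softmin]
  have hF1 : F 1 = softmin φ z' a := by
    simp [hF, hw, hS, hd, softmin]
  calc |softmin φ z' a - softmin φ z a| = ‖F 1 - F 0‖ := by
        rw [hF0, hF1, Real.norm_eq_abs]
    _ ≤ φ * M := by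
        refine norm_image_sub_le_of_norm_deriv_le_segment_01'
          (f' := F') (fun x _ => (hderivF x).hasDerivWithinAt) (fun x _ => ?_)
        rw [Real.norm_eq_abs]; exact hbound x

/-- `max_y |𝒫₃(μ,Q,μ̃)(y) − 𝒫₃(μ,Q',μ̃)(y)| ≤ φ |𝒜| ‖Q − Q'‖∞`. -/
theorem P3_lipschitz_in_Q
    {X A : Type*} [Fintype X] [Fintype A] [Nonempty X] [Nonempty A]
    (φ : ℝ) (hφ : 0 < φ)
    (p : X → A → (X → ℝ) → (X → ℝ) → X → ℝ)
    (hp : ∀ x a μ μt, IsDist μ → IsDist μt → IsDist (p x a μ μt))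
    (μ μt : X → ℝ) (hμ : IsDist μ) (hμt : IsDist μt)
    (Q Q' : X → A → ℝ) :
    ∀ y, |P3 φ p μ Q μt y - P3 φ p μ Q' μt y| ≤
      φ * (Fintype.card A : ℝ) * supNorm (fun x a => Q x a - Q' x a) := by
  intro y
  set M : ℝ := supNorm (fun x a => Q x a - Q' x a) with hMdef
  have hMb : ∀ x b, |Q x b - Q' x b| ≤ M := by
    intro x b
    exact Finset.le_sup' (f := fun q : X × A => |Q q.1 q.2 - Q' q.1 q.2|)
      (Finset.mem_univ (x, b))
  have hM0 : 0 ≤ M := by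
    obtain ⟨x⟩ := ‹Nonempty X›; obtain ⟨b⟩ := ‹Nonempty A›
    exact le_trans (abs_nonneg _) (hMb x b)
  have hsm : ∀ x b, |softmin φ (Q x) b - softmin φ (Q' x) b| ≤ φ * M := by
    intro x b
    exact softmin_lipschitz φ hφ (Q' x) (Q x) M (fun b' => hMb x b') b
  have hpb : ∀ x b, 0 ≤ p x b μ μt y ∧ p x b μ μt y ≤ 1 := by
    intro x b
    obtain ⟨hnn, hsum⟩ := hp x b μ μt hμ hμt
    refine ⟨hnn y, ?_⟩
    rw [← hsum]
    exact Finset.single_le_sum (fun i _ => hnn i) (Finset.mem_univ y)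
  have hdiff : P3 φ p μ Q μt y - P3 φ p μ Q' μt y
      = ∑ x', μ x' * ∑ b, (softmin φ (Q x') b - softmin φ (Q' x') b) * p x' b μ μt y := by
    simp only [P3]
    rw [sub_sub_sub_cancel_right, ← Finset.sum_sub_distrib]
    refine Finset.sum_congr rfl fun x' _ => ?_
    rw [← mul_sub, ← Finset.sum_sub_distrib]
    congr 1
    refine Finset.sum_congr rfl fun b _ => ?_
    ring
  rw [hdiff]
  have step : ∀ x', |μ x' * ∑ b, (softmin φ (Q x') b - softmin φ (Q' x') b) * p x' b μ μt y|
      ≤ μ x' * ((Fintype.card A : ℝ) * (φ * M)) := by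
    intro x'
    rw [abs_mul, abs_of_nonneg (hμ.1 x')]
    refine mul_le_mul_of_nonneg_left ?_ (hμ.1 x')
    calc |∑ b, (softmin φ (Q x') b - softmin φ (Q' x') b) * p x' b μ μt y|
        ≤ ∑ b, |(softmin φ (Q x') b - softmin φ (Q' x') b) * p x' b μ μt y| :=
          Finset.abs_sum_le_sum_abs _ _
      _ ≤ ∑ _b : A, φ * M := by
          refine Finset.sum_le_sum fun b _ => ?_
          rw [abs_mul, abs_of_nonneg (hpb x' b).1]
          calc |softmin φ (Q x') b - softmin φ (Q' x') b| * p x' b μ μt y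
              ≤ (φ * M) * 1 :=
                mul_le_mul (hsm x' b) (hpb x' b).2 (hpb x' b).1
                  (by positivity)
            _ = φ * M := mul_one _
      _ = (Fintype.card A : ℝ) * (φ * M) := by
          rw [Finset.sum_const, Finset.card_univ, nsmul_eq_mul]
  calc |∑ x', μ x' * ∑ b, (softmin φ (Q x') b - softmin φ (Q' x') b) * p x' b μ μt y|
      ≤ ∑ x', μ x' * ((Fintype.card A : ℝ) * (φ * M)) :=
        le_trans (Finset.abs_sum_le_sum_abs _ _) (Finset.sum_le_sum fun x' _ => step x')
    _ = φ * (Fintype.card A : ℝ) * M := by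
        rw [← Finset.sum_mul, hμ.2, one_mul]; ring
end

section
/- Assume there is c^φ > 0 such that ∑_{a∈𝒜} softmin_φ(Q(x',·))(a) p(x|x',a,μ,μ̃) ≥ c^φ for all x, x' ∈ 𝒳, every Q-table Q, and all distributions μ, μ̃ on 𝒳. Then for all distributions μ, μ', μ̃ and every Q-table Q: max_{y∈𝒳} |𝒫₃(μ,Q,μ̃)(y) − 𝒫₃(μ',Q,μ̃)(y)| ≤ (L_p^{glob} + 2 − |𝒳| c^φ) ‖μ − μ'‖₁, where |𝒳| is the cardinality of 𝒳. -/
open Finset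

lemma softmin_nonneg {A : Type*} [Fintype A] [Nonempty A] (φ : ℝ) (z : A → ℝ) (a : A) :
    0 ≤ softmin φ z a := by
  unfold softmin
  positivity

lemma softmin_sum_one {A : Type*} [Fintype A] [Nonempty A] (φ : ℝ) (z : A → ℝ) :
    ∑ a, softmin φ z a = 1 := by
  unfold softmin
  rw [← Finset.sum_div]
  have h : 0 < ∑ a', Real.exp (-φ * z a') :=
    Finset.sum_pos (fun a _ => Real.exp_pos _) Finset.univ_nonempty
  field_simp

/-- if `∑_a softmin_φ(Q(x',·))(a) p(x|x',a,μ,μ̃) ≥ c^φ > 0` uniformly, then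
`max_y |𝒫₃(μ,Q,μ̃)(y) − 𝒫₃(μ',Q,μ̃)(y)| ≤ (L_p^glob + 2 − |𝒳| c^φ) ‖μ − μ'‖₁`. -/
theorem P3_lipschitz_in_global_measure
    {X A : Type*} [Fintype X] [Fintype A] [Nonempty X] [Nonempty A]
    (φ : ℝ) (hφ : 0 < φ)
    (p : X → A → (X → ℝ) → (X → ℝ) → X → ℝ)
    (Lpg Lpl : ℝ) (hLpg : 0 ≤ Lpg) (hLpl : 0 ≤ Lpl)
    (hp : ∀ x a μ μt, IsDist μ → IsDist μt → IsDist (p x a μ μt))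
    (hpglob : ∀ x a μ μ' μt, IsDist μ → IsDist μ' → IsDist μt →
      l1Dist (p x a μ μt) (p x a μ' μt) ≤ Lpg * l1Dist μ μ')
    (hploc : ∀ x a μ μt μt', IsDist μ → IsDist μt → IsDist μt' →
      l1Dist (p x a μ μt) (p x a μ μt') ≤ Lpl * l1Dist μt μt')
    (cφ : ℝ) (hcφ : 0 < cφ)
    (hc : ∀ (x x' : X) (Q : X → A → ℝ) (μ μt : X → ℝ), IsDist μ → IsDist μt →
      cφ ≤ ∑ a, softmin φ (Q x') a * p x' a μ μt x)
    (μ μ' μt : X → ℝ) (hμ : IsDist μ) (hμ' : IsDist μ') (hμt : IsDist μt)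
    (Q : X → A → ℝ) :
    ∀ y, |P3 φ p μ Q μt y - P3 φ p μ' Q μt y| ≤
      (Lpg + 2 - (Fintype.card X : ℝ) * cφ) * l1Dist μ μ' := by
  intro y
  classical
  set D := l1Dist μ μ' with hDdef
  have hD : 0 ≤ D := Finset.sum_nonneg fun x _ => abs_nonneg _
  -- notations
  set s : X → A → ℝ := fun x' a => softmin φ (Q x') a with hs
  have hs0 : ∀ x' a, 0 ≤ s x' a := fun x' a => softmin_nonneg φ _ a
  have hs1 : ∀ x', ∑ a, s x' a = 1 := fun x' => softmin_sum_one φ _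
  set F : X → ℝ := fun x' => ∑ a, s x' a * p x' a μ μt y with hF
  set g : X → ℝ := fun x' => ∑ a, s x' a * p x' a μ' μt y with hg
  -- g lower bound
  have hg_lb : ∀ x', cφ ≤ g x' := fun x' => hc y x' Q μ' μt hμ' hμt
  -- the total mass of g over all y' is 1
  have hGsum : ∀ x', ∑ y', ∑ a, s x' a * p x' a μ' μt y' = 1 := by
    intro x'
    rw [Finset.sum_comm]
    have : ∀ a ∈ Finset.univ, ∑ y', s x' a * p x' a μ' μt y' = s x' a := by
      intro a _
      rw [← Finset.mul_sum, (hp x' a μ' μt hμ' hμt).2, mul_one]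
    rw [Finset.sum_congr rfl this, hs1]
  -- cardinality bound
  have hcard1 : (Fintype.card X : ℝ) * cφ ≤ 1 := by
    obtain ⟨x₀⟩ := ‹Nonempty X›
    have := hGsum x₀
    calc (Fintype.card X : ℝ) * cφ = ∑ _y' : X, cφ := by
          rw [Finset.sum_const, nsmul_eq_mul, Fintype.card]
      _ ≤ ∑ y', ∑ a, s x₀ a * p x₀ a μ' μt y' :=
          Finset.sum_le_sum fun y' _ => hc y' x₀ Q μ' μt hμ' hμt
      _ = 1 := this
  -- g upper bound
  have hg_ub : ∀ x', g x' ≤ 1 - ((Fintype.card X : ℝ) - 1) * cφ := by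
    intro x'
    have herase : ((Fintype.card X : ℝ) - 1) * cφ ≤
        ∑ y' ∈ Finset.univ.erase y, ∑ a, s x' a * p x' a μ' μt y' := by
      have hcardn : ((Finset.univ.erase y).card : ℝ) = (Fintype.card X : ℝ) - 1 := by
        have h1 : 1 ≤ Fintype.card X := Fintype.card_pos
        rw [Finset.card_erase_of_mem (Finset.mem_univ y), Finset.card_univ,
          Nat.cast_sub h1, Nat.cast_one]
      calc ((Fintype.card X : ℝ) - 1) * cφ
          = ∑ _y' ∈ Finset.univ.erase y, cφ := by
            rw [Finset.sum_const, nsmul_eq_mul, hcardn]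
        _ ≤ _ := Finset.sum_le_sum fun y' _ => hc y' x' Q μ' μt hμ' hμt
    have hsplit : g x' + ∑ y' ∈ Finset.univ.erase y, ∑ a, s x' a * p x' a μ' μt y' = 1 := by
      calc g x' + ∑ y' ∈ Finset.univ.erase y, ∑ a, s x' a * p x' a μ' μt y'
          = ∑ y', ∑ a, s x' a * p x' a μ' μt y' :=
            Finset.add_sum_erase Finset.univ (fun y' => ∑ a, s x' a * p x' a μ' μt y')
              (Finset.mem_univ y)
        _ = 1 := hGsum x'
    linarith
  -- entrywise l1 bounds
  have habs_p : ∀ x' a, |p x' a μ μt y - p x' a μ' μt y| ≤ Lpg * D := by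
    intro x' a
    calc |p x' a μ μt y - p x' a μ' μt y|
        ≤ l1Dist (p x' a μ μt) (p x' a μ' μt) := by
          rw [l1Dist]
          exact Finset.single_le_sum (f := fun x => |p x' a μ μt x - p x' a μ' μt x|)
            (fun x _ => abs_nonneg _) (Finset.mem_univ y)
      _ ≤ Lpg * D := hpglob x' a μ μ' μt hμ hμ' hμt
  have habs_μ : |μ y - μ' y| ≤ D := by
    rw [hDdef, l1Dist]
    exact Finset.single_le_sum (f := fun x => |μ x - μ' x|)
      (fun x _ => abs_nonneg _) (Finset.mem_univ y)
  -- the decomposition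
  have h0 : ∑ x', (μ x' - μ' x') * cφ = 0 := by
    rw [← Finset.sum_mul, Finset.sum_sub_distrib, hμ.2, hμ'.2]
    ring
  have key : P3 φ p μ Q μt y - P3 φ p μ' Q μt y =
      (∑ x', μ x' * (F x' - g x')) + (∑ x', (μ x' - μ' x') * (g x' - cφ))
        - (μ y - μ' y) := by
    simp only [P3]
    rw [← Finset.sum_add_distrib]
    have hc2 : ∀ x' ∈ Finset.univ, μ x' * (F x' - g x') + (μ x' - μ' x') * (g x' - cφ)
        = (μ x' * F x' - μ' x' * g x') - (μ x' - μ' x') * cφ := by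
      intro x' _; ring
    rw [Finset.sum_congr rfl hc2, Finset.sum_sub_distrib, h0, Finset.sum_sub_distrib]
    ring
  -- bound T1
  have hT1 : |∑ x', μ x' * (F x' - g x')| ≤ Lpg * D := by
    calc |∑ x', μ x' * (F x' - g x')| ≤ ∑ x', |μ x' * (F x' - g x')| :=
          Finset.abs_sum_le_sum_abs _ _
      _ ≤ ∑ x', μ x' * (Lpg * D) := by
          apply Finset.sum_le_sum
          intro x' _
          rw [abs_mul, abs_of_nonneg (hμ.1 x')]
          apply mul_le_mul_of_nonneg_left _ (hμ.1 x')
          calc |F x' - g x'| = |∑ a, s x' a * (p x' a μ μt y - p x' a μ' μt y)| := by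
                simp only [hF, hg, ← Finset.sum_sub_distrib, mul_sub]
            _ ≤ ∑ a, |s x' a * (p x' a μ μt y - p x' a μ' μt y)| :=
                Finset.abs_sum_le_sum_abs _ _
            _ ≤ ∑ a, s x' a * (Lpg * D) := by
                apply Finset.sum_le_sum
                intro a _
                rw [abs_mul, abs_of_nonneg (hs0 x' a)]
                exact mul_le_mul_of_nonneg_left (habs_p x' a) (hs0 x' a)
            _ = Lpg * D := by rw [← Finset.sum_mul, hs1, one_mul]
      _ = Lpg * D := by rw [← Finset.sum_mul, hμ.2, one_mul]
  -- bound T2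
  have hT2 : |∑ x', (μ x' - μ' x') * (g x' - cφ)| ≤ (1 - (Fintype.card X : ℝ) * cφ) * D := by
    calc |∑ x', (μ x' - μ' x') * (g x' - cφ)| ≤ ∑ x', |(μ x' - μ' x') * (g x' - cφ)| :=
          Finset.abs_sum_le_sum_abs _ _
      _ ≤ ∑ x', |μ x' - μ' x'| * (1 - (Fintype.card X : ℝ) * cφ) := by
          apply Finset.sum_le_sum
          intro x' _
          rw [abs_mul]
          apply mul_le_mul_of_nonneg_left _ (abs_nonneg _)
          rw [abs_of_nonneg (by linarith [hg_lb x'])]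
          have := hg_ub x'
          linarith
      _ = (1 - (Fintype.card X : ℝ) * cφ) * D := by
          rw [← Finset.sum_mul, hDdef, l1Dist, mul_comm]
  calc |P3 φ p μ Q μt y - P3 φ p μ' Q μt y|
      ≤ |∑ x', μ x' * (F x' - g x')| + |∑ x', (μ x' - μ' x') * (g x' - cφ)|
        + |μ y - μ' y| := by
        rw [key]
        exact (abs_sub _ _).trans (add_le_add_left (abs_add_le _ _) _)
    _ ≤ Lpg * D + (1 - (Fintype.card X : ℝ) * cφ) * D + D :=
        add_le_add (add_le_add hT1 hT2) habs_μ
    _ = (Lpg + 2 - (Fintype.card X : ℝ) * cφ) * D := by ring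
end

section
/- For every fixed pair (x,a) ∈ 𝒳 × 𝒜, all distributions μ, μ̃ on 𝒳 and all Q-tables Q, Q', one has max_{y∈𝒳} |𝒫̃₃^{(x,a)}(μ,Q,μ̃)(y) − 𝒫̃₃^{(x,a)}(μ,Q',μ̃)(y)| ≤ φ |𝒜| ‖Q − Q'‖∞, where |𝒜| is the cardinality of 𝒜. -/
open Finset

/-- The operator `𝒫̃₃^{(x,a)}`. -/
noncomputable def Pt3 {X A : Type*} [Fintype X] [Fintype A] [DecidableEq X]
    (φ : ℝ) (p : X → A → (X → ℝ) → (X → ℝ) → X → ℝ)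
    (x : X) (a : A) (μ : X → ℝ) (Q : X → A → ℝ) (μt : X → ℝ) (y : X) : ℝ :=
  (∑ x' ∈ Finset.univ.erase x, μt x' * ∑ a', softmin φ (Q x') a' * p x' a' μ μt y)
    + μt x * p x a μ μt y - μt y

/-- Key arithmetic inequality for the softmin Lipschitz bound. -/
lemma frac_ineq (d E F A0 R A' R' : ℝ) (hd0 : 0 ≤ d) (hEF : E * F = 1)
    (hF0 : 0 < F) (hE0 : 0 < E)
    (hratio : E - F ≤ d * (E + F + 2))
    (hA0 : 0 < A0) (hA' : 0 < A') (hR : 0 ≤ R) (hR'0 : 0 ≤ R')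
    (hAle : A0 ≤ A' * E) (hR'le : R' ≤ R * E) :
    A0 / (A0 + R) - A' / (A' + R') ≤ d := by
  have hden1 : 0 < A0 + R := by linarith
  have hden2 : 0 < A' + R' := by linarith
  have hden3 : 0 < A0 * F + R * E := by positivity
  have step1 : A0 * F / (A0 * F + R * E) ≤ A' / (A' + R') := by
    rw [div_le_div_iff₀ hden3 hden2]
    have hAF : A0 * F ≤ A' := by nlinarith
    nlinarith [mul_nonneg (mul_nonneg hA0.le hF0.le) hR'0]
  have step2 : A0 / (A0 + R) - A0 * F / (A0 * F + R * E) ≤ d := by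
    rw [div_sub_div _ _ (ne_of_gt hden1) (ne_of_gt hden3), div_le_iff₀ (mul_pos hden1 hden3)]
    have key : 2 * (A0 * R) ≤ A0 * A0 * F + R * R * E := by
      nlinarith [mul_nonneg (sq_nonneg (A0 * F - R)) hE0.le]
    nlinarith [mul_le_mul_of_nonneg_left key hd0,
      mul_le_mul_of_nonneg_left hratio (mul_nonneg hA0.le hR)]
  linarith

/-- tanh-type inequality: `e^d - e^{-d} ≤ d (e^d + e^{-d} + 2)`. -/
lemma exp_ratio_ineq (d : ℝ) (hd : 0 ≤ d) :
    Real.exp d - Real.exp (-d) ≤ d * (Real.exp d + Real.exp (-d) + 2) := by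
  have h1 : d + 1 ≤ Real.exp d := Real.add_one_le_exp d
  have h2 : -d + 1 ≤ Real.exp (-d) := Real.add_one_le_exp (-d)
  have hE : Real.exp d * Real.exp (-d) = 1 := by
    rw [← Real.exp_add]; simp
  nlinarith [Real.exp_pos d, Real.exp_pos (-d)]

/-- One-sided Lipschitz bound for a softmin component. -/
lemma softmin_sub_le {A : Type*} [Fintype A] [DecidableEq A] (φ ε : ℝ) (hφ : 0 < φ)
    (z z' : A → ℝ) (h : ∀ b, |z b - z' b| ≤ ε) (a : A) :
    softmin φ z a - softmin φ z' a ≤ φ * ε := by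
  have hε : 0 ≤ ε := le_trans (abs_nonneg _) (h a)
  have hd0 : (0:ℝ) ≤ φ * ε := by positivity
  have hEF : Real.exp (φ * ε) * Real.exp (-(φ * ε)) = 1 := by
    rw [← Real.exp_add]; simp
  have huv : ∀ b, Real.exp (-φ * z b) ≤ Real.exp (-φ * z' b) * Real.exp (φ * ε) := by
    intro b
    rw [← Real.exp_add]
    apply Real.exp_le_exp.2
    have h1 := (abs_le.1 (h b)).1
    nlinarith [mul_le_mul_of_nonneg_left h1 hφ.le]
  have hvu : ∀ b, Real.exp (-φ * z' b) ≤ Real.exp (-φ * z b) * Real.exp (φ * ε) := by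
    intro b
    rw [← Real.exp_add]
    apply Real.exp_le_exp.2
    have h1 := (abs_le.1 (h b)).2
    nlinarith [mul_le_mul_of_nonneg_left h1 hφ.le]
  have hU : ∑ b, Real.exp (-φ * z b)
      = Real.exp (-φ * z a) + ∑ b ∈ Finset.univ.erase a, Real.exp (-φ * z b) :=
    (Finset.add_sum_erase _ _ (Finset.mem_univ a)).symm
  have hV : ∑ b, Real.exp (-φ * z' b)
      = Real.exp (-φ * z' a) + ∑ b ∈ Finset.univ.erase a, Real.exp (-φ * z' b) :=
    (Finset.add_sum_erase _ _ (Finset.mem_univ a)).symm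
  rw [softmin, softmin, hU, hV]
  exact frac_ineq (φ * ε) (Real.exp (φ * ε)) (Real.exp (-(φ * ε))) _ _ _ _
    hd0 hEF (Real.exp_pos _) (Real.exp_pos _)
    (exp_ratio_ineq (φ * ε) hd0)
    (Real.exp_pos _) (Real.exp_pos _)
    (Finset.sum_nonneg fun b _ => (Real.exp_pos _).le)
    (Finset.sum_nonneg fun b _ => (Real.exp_pos _).le)
    (huv a)
    (by rw [Finset.sum_mul]; exact Finset.sum_le_sum fun b _ => hvu b)

/-- Two-sided Lipschitz bound for a softmin component. -/
lemma abs_softmin_sub_le {A : Type*} [Fintype A] [DecidableEq A] (φ ε : ℝ) (hφ : 0 < φ)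
    (z z' : A → ℝ) (h : ∀ b, |z b - z' b| ≤ ε) (a : A) :
    |softmin φ z a - softmin φ z' a| ≤ φ * ε := by
  rw [abs_sub_le_iff]
  exact ⟨softmin_sub_le φ ε hφ z z' h a,
    softmin_sub_le φ ε hφ z' z (fun b => by rw [abs_sub_comm]; exact h b) a⟩

/-- `max_y |𝒫̃₃^{(x,a)}(μ,Q,μ̃)(y) − 𝒫̃₃^{(x,a)}(μ,Q',μ̃)(y)| ≤ φ |𝒜| ‖Q − Q'‖∞`. -/
theorem Pt3_lipschitz_in_Q
    {X A : Type*} [Fintype X] [Fintype A] [Nonempty X] [Nonempty A] [DecidableEq X]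
    (φ : ℝ) (hφ : 0 < φ)
    (p : X → A → (X → ℝ) → (X → ℝ) → X → ℝ)
    (hp : ∀ x a μ μt, IsDist μ → IsDist μt → IsDist (p x a μ μt))
    (x : X) (a : A)
    (μ μt : X → ℝ) (hμ : IsDist μ) (hμt : IsDist μt)
    (Q Q' : X → A → ℝ) :
    ∀ y, |Pt3 φ p x a μ Q μt y - Pt3 φ p x a μ Q' μt y| ≤
      φ * (Fintype.card A : ℝ) * supNorm (fun x a => Q x a - Q' x a) := by
  classical
  intro y
  set ε := supNorm (fun x a => Q x a - Q' x a) with hεd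
  have hbd : ∀ x' a', |Q x' a' - Q' x' a'| ≤ ε := by
    intro x' a'
    exact Finset.le_sup' (fun q : X × A => |Q q.1 q.2 - Q' q.1 q.2|) (Finset.mem_univ (x', a'))
  have hε0 : 0 ≤ ε := le_trans (abs_nonneg _) (hbd x a)
  have hp0 : ∀ x' a', 0 ≤ p x' a' μ μt y := fun x' a' => (hp x' a' μ μt hμ hμt).1 y
  have hp1 : ∀ x' a', p x' a' μ μt y ≤ 1 := by
    intro x' a'
    have hd := hp x' a' μ μt hμ hμt
    calc p x' a' μ μt y ≤ ∑ y', p x' a' μ μt y' :=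
          Finset.single_le_sum (fun y' _ => hd.1 y') (Finset.mem_univ y)
      _ = 1 := hd.2
  have hdiff : Pt3 φ p x a μ Q μt y - Pt3 φ p x a μ Q' μt y
      = ∑ x' ∈ Finset.univ.erase x,
          μt x' * ∑ a', (softmin φ (Q x') a' - softmin φ (Q' x') a') * p x' a' μ μt y := by
    simp only [Pt3]
    have h1 : ∀ x' : X, μt x' * ∑ a', (softmin φ (Q x') a' - softmin φ (Q' x') a') * p x' a' μ μt y
        = μt x' * ∑ a', softmin φ (Q x') a' * p x' a' μ μt y
          - μt x' * ∑ a', softmin φ (Q' x') a' * p x' a' μ μt y := by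
      intro x'
      rw [← mul_sub, ← Finset.sum_sub_distrib]
      simp only [sub_mul]
    rw [Finset.sum_congr rfl (fun x' _ => h1 x'), Finset.sum_sub_distrib]
    ring
  have hinner : ∀ x' : X,
      |∑ a', (softmin φ (Q x') a' - softmin φ (Q' x') a') * p x' a' μ μt y|
        ≤ (Fintype.card A : ℝ) * (φ * ε) := by
    intro x'
    calc |∑ a', (softmin φ (Q x') a' - softmin φ (Q' x') a') * p x' a' μ μt y|
        ≤ ∑ a', |(softmin φ (Q x') a' - softmin φ (Q' x') a') * p x' a' μ μt y| :=
          Finset.abs_sum_le_sum_abs _ _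
      _ ≤ ∑ _a' : A, φ * ε := by
          apply Finset.sum_le_sum
          intro a' _
          rw [abs_mul, abs_of_nonneg (hp0 x' a')]
          calc |softmin φ (Q x') a' - softmin φ (Q' x') a'| * p x' a' μ μt y
              ≤ (φ * ε) * 1 := by
                apply mul_le_mul (abs_softmin_sub_le φ ε hφ (Q x') (Q' x') (hbd x') a')
                  (hp1 x' a') (hp0 x' a') (by positivity)
            _ = φ * ε := mul_one _
      _ = (Fintype.card A : ℝ) * (φ * ε) := by
          rw [Finset.sum_const, Finset.card_univ, nsmul_eq_mul]
  calc |Pt3 φ p x a μ Q μt y - Pt3 φ p x a μ Q' μt y|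
      = |∑ x' ∈ Finset.univ.erase x,
          μt x' * ∑ a', (softmin φ (Q x') a' - softmin φ (Q' x') a') * p x' a' μ μt y| := by
        rw [hdiff]
    _ ≤ ∑ x' ∈ Finset.univ.erase x,
          |μt x' * ∑ a', (softmin φ (Q x') a' - softmin φ (Q' x') a') * p x' a' μ μt y| :=
        Finset.abs_sum_le_sum_abs _ _
    _ ≤ ∑ x' ∈ Finset.univ.erase x, μt x' * ((Fintype.card A : ℝ) * (φ * ε)) := by
        apply Finset.sum_le_sum
        intro x' _
        rw [abs_mul, abs_of_nonneg (hμt.1 x')]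
        exact mul_le_mul_of_nonneg_left (hinner x') (hμt.1 x')
    _ = (∑ x' ∈ Finset.univ.erase x, μt x') * ((Fintype.card A : ℝ) * (φ * ε)) := by
        rw [Finset.sum_mul]
    _ ≤ 1 * ((Fintype.card A : ℝ) * (φ * ε)) := by
        apply mul_le_mul_of_nonneg_right _ (by positivity)
        calc ∑ x' ∈ Finset.univ.erase x, μt x'
            ≤ ∑ x', μt x' :=
              Finset.sum_le_sum_of_subset_of_nonneg (Finset.erase_subset _ _)
                (fun i _ _ => hμt.1 i)
          _ = 1 := hμt.2
    _ = φ * (Fintype.card A : ℝ) * ε := by ring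
end

section
/- For all distributions μ, μ̃, μ̃' on 𝒳 and every Q-table Q, one has max_{(x,a)} |𝒯₃(μ,Q,μ̃)(x,a) − 𝒯₃(μ,Q,μ̃')(x,a)| ≤ (L_f^{loc} + γ L_p^{loc} ‖Q‖∞) ‖μ̃ − μ̃'‖₁. -/
open Finset

/-- `min_{a'} Q(x,a')`. -/
noncomputable def minQ {X A : Type*} [Fintype A] [Nonempty A] (Q : X → A → ℝ) (x : X) : ℝ :=
  Finset.univ.inf' Finset.univ_nonempty (Q x)

/-- The operator `𝒯₃`. -/
noncomputable def T3 {X A : Type*} [Fintype X] [Fintype A] [Nonempty A]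
    (γ : ℝ) (f : X → A → (X → ℝ) → (X → ℝ) → ℝ)
    (p : X → A → (X → ℝ) → (X → ℝ) → X → ℝ)
    (μ : X → ℝ) (Q : X → A → ℝ) (μt : X → ℝ) (x : X) (a : A) : ℝ :=
  f x a μ μt + γ * ∑ x', p x a μ μt x' * minQ Q x' - Q x a

/-- `max_{(x,a)} |𝒯₃(μ,Q,μ̃)(x,a) − 𝒯₃(μ,Q,μ̃')(x,a)| ≤ (L_f^loc + γ L_p^loc ‖Q‖∞) ‖μ̃ − μ̃'‖₁`. -/
theorem T3_lipschitz_in_local_measure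
    {X A : Type*} [Fintype X] [Fintype A] [Nonempty X] [Nonempty A]
    (γ : ℝ) (hγ0 : 0 < γ) (hγ1 : γ < 1)
    (p : X → A → (X → ℝ) → (X → ℝ) → X → ℝ)
    (Lpg Lpl : ℝ) (hLpg : 0 ≤ Lpg) (hLpl : 0 ≤ Lpl)
    (hp : ∀ x a μ μt, IsDist μ → IsDist μt → IsDist (p x a μ μt))
    (hpglob : ∀ x a μ μ' μt, IsDist μ → IsDist μ' → IsDist μt →
      l1Dist (p x a μ μt) (p x a μ' μt) ≤ Lpg * l1Dist μ μ')
    (hploc : ∀ x a μ μt μt', IsDist μ → IsDist μt → IsDist μt' →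
      l1Dist (p x a μ μt) (p x a μ μt') ≤ Lpl * l1Dist μt μt')
    (f : X → A → (X → ℝ) → (X → ℝ) → ℝ)
    (hfbdd : ∃ C, ∀ x a μ μt, IsDist μ → IsDist μt → |f x a μ μt| ≤ C)
    (Lfg Lfl : ℝ)
    (hfglob : ∀ x a μ μ' μt, IsDist μ → IsDist μ' → IsDist μt →
      |f x a μ μt - f x a μ' μt| ≤ Lfg * l1Dist μ μ')
    (hfloc : ∀ x a μ μt μt', IsDist μ → IsDist μt → IsDist μt' →
      |f x a μ μt - f x a μ μt'| ≤ Lfl * l1Dist μt μt')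
    (μ μt μt' : X → ℝ) (hμ : IsDist μ) (hμt : IsDist μt) (hμt' : IsDist μt')
    (Q : X → A → ℝ) :
    ∀ x a, |T3 γ f p μ Q μt x a - T3 γ f p μ Q μt' x a| ≤
      (Lfl + γ * Lpl * supNorm Q) * l1Dist μt μt' := by
  intro x a
  have hminbd : ∀ x', |minQ Q x'| ≤ supNorm Q := by
    intro x'
    have h1 : minQ Q x' ≤ supNorm Q := by
      obtain ⟨a0⟩ := (inferInstance : Nonempty A)
      calc minQ Q x' ≤ Q x' a0 := Finset.inf'_le _ (Finset.mem_univ a0)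
        _ ≤ |Q x' a0| := le_abs_self _
        _ ≤ supNorm Q := Finset.le_sup' (fun q : X × A => |Q q.1 q.2|) (Finset.mem_univ (x', a0))
    have h2 : -supNorm Q ≤ minQ Q x' := by
      rw [minQ, Finset.le_inf'_iff]
      intro b _
      have h4 : |Q x' b| ≤ supNorm Q :=
        Finset.le_sup' (fun q : X × A => |Q q.1 q.2|) (Finset.mem_univ (x', b))
      have := neg_abs_le (Q x' b)
      linarith
    rw [abs_le]; exact ⟨h2, h1⟩
  have hsum : |∑ x', p x a μ μt x' * minQ Q x' - ∑ x', p x a μ μt' x' * minQ Q x'|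
      ≤ supNorm Q * l1Dist (p x a μ μt) (p x a μ μt') := by
    rw [← Finset.sum_sub_distrib]
    calc |∑ x', (p x a μ μt x' * minQ Q x' - p x a μ μt' x' * minQ Q x')|
        ≤ ∑ x', |p x a μ μt x' * minQ Q x' - p x a μ μt' x' * minQ Q x'| :=
          Finset.abs_sum_le_sum_abs _ _
      _ = ∑ x', |p x a μ μt x' - p x a μ μt' x'| * |minQ Q x'| := by
          congr 1; ext x'; rw [← sub_mul, abs_mul]
      _ ≤ ∑ x', |p x a μ μt x' - p x a μ μt' x'| * supNorm Q := by
          apply Finset.sum_le_sum; intro x' _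
          exact mul_le_mul_of_nonneg_left (hminbd x') (abs_nonneg _)
      _ = supNorm Q * l1Dist (p x a μ μt) (p x a μ μt') := by
          rw [l1Dist, Finset.mul_sum]; congr 1; ext x'; ring
  have hQ0 : 0 ≤ supNorm Q := by
    obtain ⟨q⟩ := (inferInstance : Nonempty (X × A))
    exact le_trans (abs_nonneg _) (Finset.le_sup' (fun q : X × A => |Q q.1 q.2|) (Finset.mem_univ q))
  have hT : T3 γ f p μ Q μt x a - T3 γ f p μ Q μt' x a
      = (f x a μ μt - f x a μ μt')
        + γ * (∑ x', p x a μ μt x' * minQ Q x' - ∑ x', p x a μ μt' x' * minQ Q x') := by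
    simp [T3]; ring
  rw [hT]
  calc |(f x a μ μt - f x a μ μt')
        + γ * (∑ x', p x a μ μt x' * minQ Q x' - ∑ x', p x a μ μt' x' * minQ Q x')|
      ≤ |f x a μ μt - f x a μ μt'|
        + γ * |∑ x', p x a μ μt x' * minQ Q x' - ∑ x', p x a μ μt' x' * minQ Q x'| := by
        refine (abs_add_le _ _).trans ?_
        rw [abs_mul, abs_of_pos hγ0]
    _ ≤ Lfl * l1Dist μt μt' + γ * (supNorm Q * (Lpl * l1Dist μt μt')) := by
        have h1 := hfloc x a μ μt μt' hμ hμt hμt'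
        have h2 := hploc x a μ μt μt' hμ hμt hμt'
        have h3 : |∑ x', p x a μ μt x' * minQ Q x' - ∑ x', p x a μ μt' x' * minQ Q x'|
            ≤ supNorm Q * (Lpl * l1Dist μt μt') :=
          hsum.trans (mul_le_mul_of_nonneg_left h2 hQ0)
        have := mul_le_mul_of_nonneg_left h3 hγ0.le
        linarith
    _ = (Lfl + γ * Lpl * supNorm Q) * l1Dist μt μt' := by ring
end

section
/- For all distributions μ, μ', μ̃ on 𝒳 and every Q-table Q, one has max_{(x,a)} |𝒯₃(μ,Q,μ̃)(x,a) − 𝒯₃(μ',Q,μ̃)(x,a)| ≤ (L_f^{glob} + γ L_p^{glob} ‖Q‖∞) ‖μ − μ'‖₁. -/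
open Finset

/-- `max_{(x,a)} |𝒯₃(μ,Q,μ̃)(x,a) − 𝒯₃(μ',Q,μ̃)(x,a)| ≤ (L_f^glob + γ L_p^glob ‖Q‖∞) ‖μ − μ'‖₁`. -/
theorem T3_lipschitz_in_global_measure
    {X A : Type*} [Fintype X] [Fintype A] [Nonempty X] [Nonempty A]
    (γ : ℝ) (hγ0 : 0 < γ) (hγ1 : γ < 1)
    (p : X → A → (X → ℝ) → (X → ℝ) → X → ℝ)
    (Lpg Lpl : ℝ) (hLpg : 0 ≤ Lpg) (hLpl : 0 ≤ Lpl)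
    (hp : ∀ x a μ μt, IsDist μ → IsDist μt → IsDist (p x a μ μt))
    (hpglob : ∀ x a μ μ' μt, IsDist μ → IsDist μ' → IsDist μt →
      l1Dist (p x a μ μt) (p x a μ' μt) ≤ Lpg * l1Dist μ μ')
    (hploc : ∀ x a μ μt μt', IsDist μ → IsDist μt → IsDist μt' →
      l1Dist (p x a μ μt) (p x a μ μt') ≤ Lpl * l1Dist μt μt')
    (f : X → A → (X → ℝ) → (X → ℝ) → ℝ)
    (hfbdd : ∃ C, ∀ x a μ μt, IsDist μ → IsDist μt → |f x a μ μt| ≤ C)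
    (Lfg Lfl : ℝ)
    (hfglob : ∀ x a μ μ' μt, IsDist μ → IsDist μ' → IsDist μt →
      |f x a μ μt - f x a μ' μt| ≤ Lfg * l1Dist μ μ')
    (hfloc : ∀ x a μ μt μt', IsDist μ → IsDist μt → IsDist μt' →
      |f x a μ μt - f x a μ μt'| ≤ Lfl * l1Dist μt μt')
    (μ μ' μt : X → ℝ) (hμ : IsDist μ) (hμ' : IsDist μ') (hμt : IsDist μt)
    (Q : X → A → ℝ) :
    ∀ x a, |T3 γ f p μ Q μt x a - T3 γ f p μ' Q μt x a| ≤
      (Lfg + γ * Lpg * supNorm Q) * l1Dist μ μ' := by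
  intro x a
  have hminQ : ∀ x', |minQ Q x'| ≤ supNorm Q := by
    intro x'
    obtain ⟨a', -, ha'⟩ := Finset.exists_mem_eq_inf' (Finset.univ_nonempty) (Q x')
    rw [minQ, ha']
    exact Finset.le_sup' (fun q : X × A => |Q q.1 q.2|) (Finset.mem_univ (x', a'))
  have key : |∑ x', p x a μ μt x' * minQ Q x' - ∑ x', p x a μ' μt x' * minQ Q x'|
      ≤ supNorm Q * l1Dist (p x a μ μt) (p x a μ' μt) := by
    rw [← Finset.sum_sub_distrib]
    calc |∑ x', (p x a μ μt x' * minQ Q x' - p x a μ' μt x' * minQ Q x')|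
        ≤ ∑ x', |p x a μ μt x' * minQ Q x' - p x a μ' μt x' * minQ Q x'| :=
          Finset.abs_sum_le_sum_abs _ _
      _ ≤ ∑ x', supNorm Q * |p x a μ μt x' - p x a μ' μt x'| := by
          apply Finset.sum_le_sum
          intro x' _
          rw [← sub_mul, abs_mul, mul_comm]
          exact mul_le_mul_of_nonneg_right (hminQ x') (abs_nonneg _)
      _ = supNorm Q * l1Dist (p x a μ μt) (p x a μ' μt) := by
          rw [l1Dist, Finset.mul_sum]
  have hsup : 0 ≤ supNorm Q := le_trans (abs_nonneg _) (hminQ Classical.ofNonempty)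
  have h1 := hfglob x a μ μ' μt hμ hμ' hμt
  have h2 := hpglob x a μ μ' μt hμ hμ' hμt
  have : |T3 γ f p μ Q μt x a - T3 γ f p μ' Q μt x a| ≤
      |f x a μ μt - f x a μ' μt| +
      γ * |∑ x', p x a μ μt x' * minQ Q x' - ∑ x', p x a μ' μt x' * minQ Q x'| := by
    simp only [T3]
    have : f x a μ μt + γ * ∑ x', p x a μ μt x' * minQ Q x' - Q x a -
        (f x a μ' μt + γ * ∑ x', p x a μ' μt x' * minQ Q x' - Q x a)
        = (f x a μ μt - f x a μ' μt) +
          γ * (∑ x', p x a μ μt x' * minQ Q x' - ∑ x', p x a μ' μt x' * minQ Q x') := by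
      ring
    rw [this]
    calc _ ≤ |f x a μ μt - f x a μ' μt| +
        |γ * (∑ x', p x a μ μt x' * minQ Q x' - ∑ x', p x a μ' μt x' * minQ Q x')| :=
          abs_add_le _ _
      _ = _ := by rw [abs_mul, abs_of_pos hγ0]
  calc |T3 γ f p μ Q μt x a - T3 γ f p μ' Q μt x a|
      ≤ |f x a μ μt - f x a μ' μt| +
        γ * |∑ x', p x a μ μt x' * minQ Q x' - ∑ x', p x a μ' μt x' * minQ Q x'| := this
    _ ≤ Lfg * l1Dist μ μ' + γ * (supNorm Q * (Lpg * l1Dist μ μ')) := by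
        gcongr
        exact le_trans key (by nlinarith)
    _ = (Lfg + γ * Lpg * supNorm Q) * l1Dist μ μ' := by ring
end

section
/- Assume there is c > 0 with p(x'|x,a,μ,μ̃) ≥ c for all x', x, a, μ, μ̃. Fix (x,a) ∈ 𝒳 × 𝒜, a distribution μ on 𝒳 and a Q-table Q. Then for all distributions μ̃, μ̃' on 𝒳, the one-step map Φ satisfies ‖Φ(μ̃) − Φ(μ̃')‖₁ ≤ (L_p^{loc} + 1 − |𝒳| c) ‖μ̃ − μ̃'‖₁, where |𝒳| is the cardinality of 𝒳. -/
open Finset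

/-- The one-step map `Φ` associated with `(x,a)`, `μ` and `Q`:
`Φ(μ̃)(y) = ∑_{x'≠x} μ̃(x') ∑_{a'} softmin_φ(Q(x',·))(a') p(y|x',a',μ,μ̃) + μ̃(x) p(y|x,a,μ,μ̃)`. -/
noncomputable def stepMap {X A : Type*} [Fintype X] [Fintype A] [DecidableEq X]
    (φ : ℝ) (p : X → A → (X → ℝ) → (X → ℝ) → X → ℝ)
    (x : X) (a : A) (μ : X → ℝ) (Q : X → A → ℝ) (μt : X → ℝ) (y : X) : ℝ :=
  (∑ x' ∈ Finset.univ.erase x, μt x' * ∑ a', softmin φ (Q x') a' * p x' a' μ μt y)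
    + μt x * p x a μ μt y

/-- if `p(x'|x,a,μ,μ̃) ≥ c > 0` uniformly, then the one-step map `Φ` satisfies
`‖Φ(μ̃) − Φ(μ̃')‖₁ ≤ (L_p^loc + 1 − |𝒳| c) ‖μ̃ − μ̃'‖₁`. -/
theorem stepMap_contraction
    {X A : Type*} [Fintype X] [Fintype A] [Nonempty X] [Nonempty A] [DecidableEq X]
    (φ : ℝ) (hφ : 0 < φ)
    (p : X → A → (X → ℝ) → (X → ℝ) → X → ℝ)
    (Lpl : ℝ) (hLpl : 0 ≤ Lpl)
    (hp : ∀ x a μ μt, IsDist μ → IsDist μt → IsDist (p x a μ μt))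
    (hploc : ∀ x a μ μt μt', IsDist μ → IsDist μt → IsDist μt' →
      l1Dist (p x a μ μt) (p x a μ μt') ≤ Lpl * l1Dist μt μt')
    (c : ℝ) (hc : 0 < c)
    (hlow : ∀ (x' x : X) (a : A) (μ μt : X → ℝ), IsDist μ → IsDist μt →
      c ≤ p x a μ μt x')
    (x : X) (a : A) (μ : X → ℝ) (hμ : IsDist μ) (Q : X → A → ℝ)
    (μt μt' : X → ℝ) (hμt : IsDist μt) (hμt' : IsDist μt') :
    l1Dist (stepMap φ p x a μ Q μt) (stepMap φ p x a μ Q μt') ≤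
      (Lpl + 1 - (Fintype.card X : ℝ) * c) * l1Dist μt μt' := by
  classical
  obtain ⟨hμt0, hμt1⟩ := hμt
  obtain ⟨hμt'0, hμt'1⟩ := hμt'
  set D := l1Dist μt μt' with hD
  -- softmin properties
  have hs0 : ∀ (x' : X) (a' : A), 0 ≤ softmin φ (Q x') a' := by
    intro x' a'
    unfold softmin
    positivity
  have hs1 : ∀ x' : X, ∑ a', softmin φ (Q x') a' = 1 := by
    intro x'
    unfold softmin
    rw [← Finset.sum_div]
    exact div_self (by positivity)
  -- the combined kernel
  set K : (X → ℝ) → X → X → ℝ :=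
    fun ν x' y => if x' = x then p x a μ ν y
      else ∑ a', softmin φ (Q x') a' * p x' a' μ ν y with hKdef
  have hstep : ∀ ν y, stepMap φ p x a μ Q ν y = ∑ x', ν x' * K ν x' y := by
    intro ν y
    rw [← Finset.sum_erase_add Finset.univ (fun x' => ν x' * K ν x' y) (Finset.mem_univ x)]
    unfold stepMap
    congr 1
    · apply Finset.sum_congr rfl
      intro x' hx'
      have hne : x' ≠ x := Finset.ne_of_mem_erase hx'
      simp [hKdef, hne]
    · simp [hKdef]
  have hKsum : ∀ ν, IsDist ν → ∀ x' : X, ∑ y, K ν x' y = 1 := by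
    intro ν hν x'
    by_cases hx : x' = x
    · simp only [hKdef, hx, if_pos rfl]
      exact (hp x a μ ν hμ hν).2
    · simp only [hKdef, if_neg hx]
      rw [Finset.sum_comm]
      calc ∑ a', ∑ y, softmin φ (Q x') a' * p x' a' μ ν y
          = ∑ a', softmin φ (Q x') a' * ∑ y, p x' a' μ ν y := by
            simp [Finset.mul_sum]
        _ = 1 := by
            simp only [fun a' => (hp x' a' μ ν hμ hν).2, mul_one]
            exact hs1 x'
  have hKlow : ∀ ν, IsDist ν → ∀ x' y, c ≤ K ν x' y := by
    intro ν hν x' y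
    by_cases hx : x' = x
    · simpa [hKdef, hx] using hlow y x a μ ν hμ hν
    · simp only [hKdef, if_neg hx]
      calc c = ∑ a', softmin φ (Q x') a' * c := by
            rw [← Finset.sum_mul, hs1 x', one_mul]
        _ ≤ ∑ a', softmin φ (Q x') a' * p x' a' μ ν y :=
            Finset.sum_le_sum fun a' _ =>
              mul_le_mul_of_nonneg_left (hlow y x' a' μ ν hμ hν) (hs0 x' a')
  have hKl1 : ∀ x' : X, ∑ y, |K μt x' y - K μt' x' y| ≤ Lpl * D := by
    intro x'
    by_cases hx : x' = x
    · have h := hploc x a μ μt μt' hμ ⟨hμt0, hμt1⟩ ⟨hμt'0, hμt'1⟩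
      simpa [hKdef, hx, l1Dist, hD] using h
    · simp only [hKdef, if_neg hx]
      calc ∑ y, |(∑ a', softmin φ (Q x') a' * p x' a' μ μt y)
              - ∑ a', softmin φ (Q x') a' * p x' a' μ μt' y|
          = ∑ y, |∑ a', softmin φ (Q x') a' * (p x' a' μ μt y - p x' a' μ μt' y)| := by
            simp [mul_sub, Finset.sum_sub_distrib]
        _ ≤ ∑ y, ∑ a', |softmin φ (Q x') a' * (p x' a' μ μt y - p x' a' μ μt' y)| :=
            Finset.sum_le_sum fun y _ => Finset.abs_sum_le_sum_abs _ _
        _ = ∑ a', softmin φ (Q x') a' * ∑ y, |p x' a' μ μt y - p x' a' μ μt' y| := by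
            rw [Finset.sum_comm]
            simp [abs_mul, abs_of_nonneg (hs0 x' _), Finset.mul_sum]
        _ ≤ ∑ a', softmin φ (Q x') a' * (Lpl * D) := by
            refine Finset.sum_le_sum fun a' _ => mul_le_mul_of_nonneg_left ?_ (hs0 x' a')
            have h := hploc x' a' μ μt μt' hμ ⟨hμt0, hμt1⟩ ⟨hμt'0, hμt'1⟩
            simpa [l1Dist, hD] using h
        _ = Lpl * D := by rw [← Finset.sum_mul, hs1 x', one_mul]
  -- pointwise decomposition
  have key : ∀ y, stepMap φ p x a μ Q μt y - stepMap φ p x a μ Q μt' y =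
      (∑ x', (μt x' - μt' x') * (K μt x' y - c))
        + ∑ x', μt' x' * (K μt x' y - K μt' x' y) := by
    intro y
    rw [hstep, hstep]
    have h1 : ∑ x' : X, (μt x' - μt' x') * c = 0 := by
      rw [← Finset.sum_mul, Finset.sum_sub_distrib, hμt1, hμt'1]
      ring
    have h2 : ∀ x', μt x' * K μt x' y - μt' x' * K μt' x' y
        = ((μt x' - μt' x') * (K μt x' y - c) + μt' x' * (K μt x' y - K μt' x' y))
          + (μt x' - μt' x') * c := by
      intro x'; ring
    calc (∑ x', μt x' * K μt x' y) - ∑ x', μt' x' * K μt' x' y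
        = ∑ x', (μt x' * K μt x' y - μt' x' * K μt' x' y) :=
          (Finset.sum_sub_distrib _ _).symm
      _ = ∑ x', (((μt x' - μt' x') * (K μt x' y - c)
            + μt' x' * (K μt x' y - K μt' x' y)) + (μt x' - μt' x') * c) :=
          Finset.sum_congr rfl fun x' _ => h2 x'
      _ = _ := by
          rw [Finset.sum_add_distrib, h1, add_zero, Finset.sum_add_distrib]
  -- first term bound (Dobrushin)
  have hKmarg : ∀ x' : X, ∑ y, (K μt x' y - c) = 1 - (Fintype.card X : ℝ) * c := by
    intro x'
    rw [Finset.sum_sub_distrib, hKsum μt ⟨hμt0, hμt1⟩ x']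
    simp [Finset.card_univ, mul_comm]
  have first : ∑ y, ∑ x', |μt x' - μt' x'| * (K μt x' y - c)
      = (1 - (Fintype.card X : ℝ) * c) * D := by
    rw [Finset.sum_comm]
    calc ∑ x', ∑ y, |μt x' - μt' x'| * (K μt x' y - c)
        = ∑ x', |μt x' - μt' x'| * (1 - (Fintype.card X : ℝ) * c) := by
          refine Finset.sum_congr rfl fun x' _ => ?_
          rw [← Finset.mul_sum, hKmarg x']
      _ = (1 - (Fintype.card X : ℝ) * c) * D := by
          rw [← Finset.sum_mul, hD]
          unfold l1Dist
          ring
  have second : ∑ y, ∑ x', μt' x' * |K μt x' y - K μt' x' y| ≤ Lpl * D := by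
    rw [Finset.sum_comm]
    calc ∑ x', ∑ y, μt' x' * |K μt x' y - K μt' x' y|
        = ∑ x', μt' x' * ∑ y, |K μt x' y - K μt' x' y| := by
          simp [Finset.mul_sum]
      _ ≤ ∑ x', μt' x' * (Lpl * D) :=
          Finset.sum_le_sum fun x' _ =>
            mul_le_mul_of_nonneg_left (hKl1 x') (hμt'0 x')
      _ = Lpl * D := by rw [← Finset.sum_mul, hμt'1, one_mul]
  -- put everything together
  have main : l1Dist (stepMap φ p x a μ Q μt) (stepMap φ p x a μ Q μt')
      ≤ (1 - (Fintype.card X : ℝ) * c) * D + Lpl * D := by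
    unfold l1Dist
    calc ∑ y, |stepMap φ p x a μ Q μt y - stepMap φ p x a μ Q μt' y|
        = ∑ y, |(∑ x', (μt x' - μt' x') * (K μt x' y - c))
            + ∑ x', μt' x' * (K μt x' y - K μt' x' y)| := by
          simp only [key]
      _ ≤ ∑ y, ((∑ x', |μt x' - μt' x'| * (K μt x' y - c))
            + ∑ x', μt' x' * |K μt x' y - K μt' x' y|) := by
          refine Finset.sum_le_sum fun y _ => ?_
          refine (abs_add_le _ _).trans (add_le_add ?_ ?_)
          · refine (Finset.abs_sum_le_sum_abs _ _).trans (le_of_eq ?_)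
            refine Finset.sum_congr rfl fun x' _ => ?_
            rw [abs_mul, abs_of_nonneg (sub_nonneg.mpr (hKlow μt ⟨hμt0, hμt1⟩ x' y))]
          · refine (Finset.abs_sum_le_sum_abs _ _).trans (le_of_eq ?_)
            refine Finset.sum_congr rfl fun x' _ => ?_
            rw [abs_mul, abs_of_nonneg (hμt'0 x')]
      _ = (∑ y, ∑ x', |μt x' - μt' x'| * (K μt x' y - c))
            + ∑ y, ∑ x', μt' x' * |K μt x' y - K μt' x' y| :=
          Finset.sum_add_distrib
      _ ≤ (1 - (Fintype.card X : ℝ) * c) * D + Lpl * D := by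
          rw [first]; exact add_le_add_right second _
  calc l1Dist (stepMap φ p x a μ Q μt) (stepMap φ p x a μ Q μt')
      ≤ (1 - (Fintype.card X : ℝ) * c) * D + Lpl * D := main
    _ = (Lpl + 1 - (Fintype.card X : ℝ) * c) * D := by ring
end

section
/- Let α : 𝒳 → 𝒜 be a pure policy. Assume there is c > 0 with p(x'|x,a,μ,μ̃) ≥ c for all x', x, a, μ, μ̃, and assume 2 L_p^{glob} < |𝒳|c and 2 L_p^{loc} < |𝒳|c. Then the system of equations in a pair of distributions (ν, μ): ν(y) = ∑_{x'∈𝒳} ν(x') p(y|x',α(x'),μ,ν) for all y, and μ(y) = ∑_{x'∈𝒳} μ(x') p(y|x',α(x'),μ,ν) for all y, has exactly one solution, and this solution satisfies ν = μ; moreover μ is the unique distribution satisfying μ(y) = ∑_{x'} μ(x') p(y|x',α(x'),μ,μ) for all y. -/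
open Finset

lemma l1_triangle {X : Type*} [Fintype X] (f g h : X → ℝ) :
    l1Dist f h ≤ l1Dist f g + l1Dist g h := by
  unfold l1Dist
  rw [← Finset.sum_add_distrib]
  exact Finset.sum_le_sum fun x _ => by
    have := abs_sub_le (f x) (g x) (h x); linarith

lemma doeblin {X : Type*} [Fintype X] (q : X → X → ℝ) (c : ℝ)
    (hq : ∀ x y, c ≤ q x y) (hrow : ∀ x, ∑ y, q x y = 1)
    (d : X → ℝ) (hd : ∑ x, d x = 0) :
    ∑ y, |∑ x, d x * q x y| ≤ (1 - (Fintype.card X : ℝ) * c) * ∑ x, |d x| := by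
  have key : ∀ y, |∑ x, d x * q x y| ≤ ∑ x, |d x| * (q x y - c) := by
    intro y
    have h1 : ∑ x, d x * q x y = ∑ x, d x * (q x y - c) := by
      simp only [mul_sub, Finset.sum_sub_distrib, ← Finset.sum_mul, hd, zero_mul, sub_zero]
    rw [h1]
    refine (Finset.abs_sum_le_sum_abs _ _).trans (Finset.sum_le_sum fun x _ => ?_)
    rw [abs_mul, abs_of_nonneg (sub_nonneg.2 (hq x y))]
  calc ∑ y, |∑ x, d x * q x y| ≤ ∑ y, ∑ x, |d x| * (q x y - c) :=
        Finset.sum_le_sum fun y _ => key y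
    _ = ∑ x, |d x| * (1 - (Fintype.card X : ℝ) * c) := by
        rw [Finset.sum_comm]
        refine Finset.sum_congr rfl fun x _ => ?_
        rw [← Finset.mul_sum, Finset.sum_sub_distrib, hrow, Finset.sum_const,
          nsmul_eq_mul, Finset.card_univ, mul_comm (Fintype.card X : ℝ) c]
    _ = (1 - (Fintype.card X : ℝ) * c) * ∑ x, |d x| := by
        rw [← Finset.sum_mul, mul_comm]

lemma key_bound {X A : Type*} [Fintype X]
    (p : X → A → (X → ℝ) → (X → ℝ) → X → ℝ) (Lpg Lpl c : ℝ)
    (hp : ∀ x a μ μt, IsDist μ → IsDist μt → IsDist (p x a μ μt))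
    (hpglob : ∀ x a μ μ' μt, IsDist μ → IsDist μ' → IsDist μt →
      l1Dist (p x a μ μt) (p x a μ' μt) ≤ Lpg * l1Dist μ μ')
    (hploc : ∀ x a μ μt μt', IsDist μ → IsDist μt → IsDist μt' →
      l1Dist (p x a μ μt) (p x a μ μt') ≤ Lpl * l1Dist μt μt')
    (hlow : ∀ (x' x : X) (a : A) (μ μt : X → ℝ), IsDist μ → IsDist μt →
      c ≤ p x a μ μt x')
    (α : X → A) (ρ ρ' μ μ' ν ν' : X → ℝ)
    (hρ : IsDist ρ) (hρ' : IsDist ρ') (hμ : IsDist μ) (hμ' : IsDist μ')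
    (hν : IsDist ν) (hν' : IsDist ν') :
    l1Dist (fun y => ∑ x, ρ x * p x (α x) μ ν y)
        (fun y => ∑ x, ρ' x * p x (α x) μ' ν' y)
      ≤ (1 - (Fintype.card X : ℝ) * c) * l1Dist ρ ρ'
        + Lpg * l1Dist μ μ' + Lpl * l1Dist ν ν' := by
  set fA : X → ℝ := fun y => ∑ x, ρ x * p x (α x) μ ν y with hfA
  set fB : X → ℝ := fun y => ∑ x, ρ' x * p x (α x) μ ν y with hfB
  set fC : X → ℝ := fun y => ∑ x, ρ' x * p x (α x) μ' ν y with hfC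
  set fD : X → ℝ := fun y => ∑ x, ρ' x * p x (α x) μ' ν' y with hfD
  have h1 : l1Dist fA fB ≤ (1 - (Fintype.card X : ℝ) * c) * l1Dist ρ ρ' := by
    have hd : ∑ x, (ρ x - ρ' x) = 0 := by
      rw [Finset.sum_sub_distrib, hρ.2, hρ'.2]; ring
    have := doeblin (fun x y => p x (α x) μ ν y) c
      (fun x y => hlow y x (α x) μ ν hμ hν)
      (fun x => (hp x (α x) μ ν hμ hν).2) (fun x => ρ x - ρ' x) hd
    unfold l1Dist
    convert this using 2 with y
    simp only [hfA, hfB, sub_mul, Finset.sum_sub_distrib]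
  have h2 : l1Dist fB fC ≤ Lpg * l1Dist μ μ' := by
    calc l1Dist fB fC = ∑ y, |∑ x, ρ' x * (p x (α x) μ ν y - p x (α x) μ' ν y)| := by
          unfold l1Dist
          refine Finset.sum_congr rfl fun y _ => ?_
          simp only [hfB, hfC, mul_sub, Finset.sum_sub_distrib]
      _ ≤ ∑ y, ∑ x, ρ' x * |p x (α x) μ ν y - p x (α x) μ' ν y| := by
          refine Finset.sum_le_sum fun y _ => ?_
          refine (Finset.abs_sum_le_sum_abs _ _).trans (Finset.sum_le_sum fun x _ => ?_)
          rw [abs_mul, abs_of_nonneg (hρ'.1 x)]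
      _ = ∑ x, ρ' x * l1Dist (p x (α x) μ ν) (p x (α x) μ' ν) := by
          rw [Finset.sum_comm]
          exact Finset.sum_congr rfl fun x _ => by rw [l1Dist, Finset.mul_sum]
      _ ≤ ∑ x, ρ' x * (Lpg * l1Dist μ μ') :=
          Finset.sum_le_sum fun x _ => mul_le_mul_of_nonneg_left
            (hpglob x (α x) μ μ' ν hμ hμ' hν) (hρ'.1 x)
      _ = Lpg * l1Dist μ μ' := by rw [← Finset.sum_mul, hρ'.2, one_mul]
  have h3 : l1Dist fC fD ≤ Lpl * l1Dist ν ν' := by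
    calc l1Dist fC fD = ∑ y, |∑ x, ρ' x * (p x (α x) μ' ν y - p x (α x) μ' ν' y)| := by
          unfold l1Dist
          refine Finset.sum_congr rfl fun y _ => ?_
          simp only [hfC, hfD, mul_sub, Finset.sum_sub_distrib]
      _ ≤ ∑ y, ∑ x, ρ' x * |p x (α x) μ' ν y - p x (α x) μ' ν' y| := by
          refine Finset.sum_le_sum fun y _ => ?_
          refine (Finset.abs_sum_le_sum_abs _ _).trans (Finset.sum_le_sum fun x _ => ?_)
          rw [abs_mul, abs_of_nonneg (hρ'.1 x)]
      _ = ∑ x, ρ' x * l1Dist (p x (α x) μ' ν) (p x (α x) μ' ν') := by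
          rw [Finset.sum_comm]
          exact Finset.sum_congr rfl fun x _ => by rw [l1Dist, Finset.mul_sum]
      _ ≤ ∑ x, ρ' x * (Lpl * l1Dist ν ν') :=
          Finset.sum_le_sum fun x _ => mul_le_mul_of_nonneg_left
            (hploc x (α x) μ' ν ν' hμ' hν hν') (hρ'.1 x)
      _ = Lpl * l1Dist ν ν' := by rw [← Finset.sum_mul, hρ'.2, one_mul]
  have t1 := l1_triangle fA fB fD
  have t2 := l1_triangle fB fC fD
  linarith

/-- for a pure policy `α`, under a uniform lower bound `c > 0` on the kernel and
`2 L_p^glob < |𝒳|c`, `2 L_p^loc < |𝒳|c`, the system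
`ν(y) = ∑_{x'} ν(x') p(y|x',α(x'),μ,ν)` and `μ(y) = ∑_{x'} μ(x') p(y|x',α(x'),μ,ν)`
(in a pair of distributions `(ν,μ)`) has exactly one solution, this solution satisfies `ν = μ`,
and `μ` is the unique distribution with `μ(y) = ∑_{x'} μ(x') p(y|x',α(x'),μ,μ)`. -/
theorem pure_policy_stationary_system
    {X A : Type*} [Fintype X] [Fintype A] [Nonempty X] [Nonempty A]
    (p : X → A → (X → ℝ) → (X → ℝ) → X → ℝ)
    (Lpg Lpl : ℝ) (hLpg : 0 ≤ Lpg) (hLpl : 0 ≤ Lpl)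
    (hp : ∀ x a μ μt, IsDist μ → IsDist μt → IsDist (p x a μ μt))
    (hpglob : ∀ x a μ μ' μt, IsDist μ → IsDist μ' → IsDist μt →
      l1Dist (p x a μ μt) (p x a μ' μt) ≤ Lpg * l1Dist μ μ')
    (hploc : ∀ x a μ μt μt', IsDist μ → IsDist μt → IsDist μt' →
      l1Dist (p x a μ μt) (p x a μ μt') ≤ Lpl * l1Dist μt μt')
    (c : ℝ) (hc : 0 < c)
    (hlow : ∀ (x' x : X) (a : A) (μ μt : X → ℝ), IsDist μ → IsDist μt →
      c ≤ p x a μ μt x')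
    (hg : 2 * Lpg < (Fintype.card X : ℝ) * c)
    (hl : 2 * Lpl < (Fintype.card X : ℝ) * c)
    (α : X → A) :
    (∃! s : (X → ℝ) × (X → ℝ), (IsDist s.1 ∧ IsDist s.2) ∧
        (∀ y, s.1 y = ∑ x', s.1 x' * p x' (α x') s.2 s.1 y) ∧
        (∀ y, s.2 y = ∑ x', s.2 x' * p x' (α x') s.2 s.1 y)) ∧
    (∀ ν μ : X → ℝ, IsDist ν → IsDist μ →
        (∀ y, ν y = ∑ x', ν x' * p x' (α x') μ ν y) →
        (∀ y, μ y = ∑ x', μ x' * p x' (α x') μ ν y) → ν = μ) ∧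
    (∃! μ : X → ℝ, IsDist μ ∧ ∀ y, μ y = ∑ x', μ x' * p x' (α x') μ μ y) := by
  have hcard : 0 < (Fintype.card X : ℝ) := by
    exact_mod_cast Fintype.card_pos
  -- the uniform distribution
  have hu : IsDist (fun _ : X => ((Fintype.card X : ℝ))⁻¹) := by
    constructor
    · intro x; positivity
    · rw [Finset.sum_const, Finset.card_univ, nsmul_eq_mul]
      field_simp
  -- |X| * c ≤ 1
  have hnc1 : (Fintype.card X : ℝ) * c ≤ 1 := by
    obtain ⟨x⟩ := (inferInstance : Nonempty X)
    have h := (hp x (α x) _ _ hu hu)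
    calc (Fintype.card X : ℝ) * c = ∑ _y : X, c := by
          rw [Finset.sum_const, Finset.card_univ, nsmul_eq_mul]
      _ ≤ ∑ y, p x (α x) (fun _ => ((Fintype.card X : ℝ))⁻¹)
            (fun _ => ((Fintype.card X : ℝ))⁻¹) y :=
          Finset.sum_le_sum fun y _ => hlow y x (α x) _ _ hu hu
      _ = 1 := h.2
  have hnc0 : 0 < (Fintype.card X : ℝ) * c := mul_pos hcard hc
  -- Part 2: any solution of the system has ν = μ
  have part2 : ∀ ν μ : X → ℝ, IsDist ν → IsDist μ →
      (∀ y, ν y = ∑ x', ν x' * p x' (α x') μ ν y) →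
      (∀ y, μ y = ∑ x', μ x' * p x' (α x') μ ν y) → ν = μ := by
    intro ν μ hν hμ h1 h2
    have hd : ∑ x, (ν x - μ x) = 0 := by
      rw [Finset.sum_sub_distrib, hν.2, hμ.2]; ring
    have hdoe := doeblin (fun x y => p x (α x) μ ν y) c
      (fun x y => hlow y x (α x) μ ν hμ hν)
      (fun x => (hp x (α x) μ ν hμ hν).2) (fun x => ν x - μ x) hd
    have heq : ∀ y, ∑ x, (ν x - μ x) * p x (α x) μ ν y = ν y - μ y := by
      intro y
      simp only [sub_mul, Finset.sum_sub_distrib]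
      rw [← h1 y, ← h2 y]
    rw [Finset.sum_congr rfl (fun y _ => by rw [heq y])] at hdoe
    have hsum0 : ∑ y, |ν y - μ y| = 0 := by
      have hnn : 0 ≤ ∑ y, |ν y - μ y| := Finset.sum_nonneg fun y _ => abs_nonneg _
      nlinarith
    funext y
    have := (Finset.sum_eq_zero_iff_of_nonneg
      (fun y _ => abs_nonneg (ν y - μ y))).1 hsum0 y (Finset.mem_univ y)
    have := abs_eq_zero.1 this
    linarith
  -- Part 3 : unique fixed point via Banach on PiLp 1
  have part3 : ∃! μ : X → ℝ, IsDist μ ∧ ∀ y, μ y = ∑ x', μ x' * p x' (α x') μ μ y := by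
    set E := PiLp 1 (fun _ : X => ℝ) with hE
    have hdistE : ∀ a b : E, dist a b = l1Dist a b := by
      intro a b
      rw [PiLp.dist_eq_sum (by norm_num : 0 < (1 : ENNReal).toReal)]
      simp [l1Dist, Real.dist_eq]
    have hev : ∀ x : X, Continuous fun μ : E => μ x := fun x =>
      (continuous_apply x).comp (PiLp.continuous_ofLp 1 fun _ : X => ℝ)
    have hclosed : IsClosed {μ : E | IsDist μ} := by
      have hset : {μ : E | IsDist μ}
          = (⋂ x, {μ : E | 0 ≤ μ x}) ∩ {μ : E | ∑ x, μ x = 1} := by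
        ext μ; simp [IsDist, Set.mem_iInter]
      rw [hset]
      exact (isClosed_iInter fun x =>
        isClosed_le continuous_const (hev x)).inter
        (isClosed_eq (continuous_finset_sum _ fun x _ => hev x) continuous_const)
    haveI : CompleteSpace {μ : E // IsDist μ} := hclosed.completeSpace_coe
    haveI : Nonempty {μ : E // IsDist μ} :=
      ⟨⟨WithLp.toLp 1 (fun _ : X => ((Fintype.card X : ℝ))⁻¹ : X → ℝ), hu⟩⟩
    have hmem : ∀ (μ : X → ℝ), IsDist μ →
        IsDist (fun y => ∑ x, μ x * p x (α x) μ μ y) := by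
      intro μ hμ
      constructor
      · intro y
        exact Finset.sum_nonneg fun x _ => mul_nonneg (hμ.1 x)
          (le_trans hc.le (hlow y x (α x) μ μ hμ hμ))
      · rw [Finset.sum_comm]
        calc ∑ x, ∑ y, μ x * p x (α x) μ μ y
            = ∑ x, μ x * ∑ y, p x (α x) μ μ y := by
              exact Finset.sum_congr rfl fun x _ => (Finset.mul_sum _ _ _).symm
          _ = ∑ x, μ x := by
              refine Finset.sum_congr rfl fun x _ => ?_
              rw [(hp x (α x) μ μ hμ hμ).2, mul_one]
          _ = 1 := hμ.2
    set S : {μ : E // IsDist μ} → {μ : E // IsDist μ} := fun μ =>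
      ⟨WithLp.toLp 1 (fun y => ∑ x, μ.1 x * p x (α x) μ.1 μ.1 y : X → ℝ), hmem μ.1 μ.2⟩ with hS
    have hK0 : 0 ≤ 1 - (Fintype.card X : ℝ) * c + Lpg + Lpl := by linarith
    set K : NNReal := ⟨1 - (Fintype.card X : ℝ) * c + Lpg + Lpl, hK0⟩ with hK
    have hC : ContractingWith K S := by
      constructor
      · rw [← NNReal.coe_lt_coe]
        show (1 - (Fintype.card X : ℝ) * c + Lpg + Lpl) < 1
        linarith
      · refine LipschitzWith.of_dist_le_mul fun a b => ?_
        rw [Subtype.dist_eq, Subtype.dist_eq, hdistE, hdistE]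
        have hkey := key_bound p Lpg Lpl c hp hpglob hploc hlow α
          a.1 b.1 a.1 b.1 a.1 b.1 a.2 b.2 a.2 b.2 a.2 b.2
        have hKc : (K : ℝ) = 1 - (Fintype.card X : ℝ) * c + Lpg + Lpl := rfl
        rw [hKc]
        calc l1Dist ((S a).1) ((S b).1)
            ≤ (1 - (Fintype.card X : ℝ) * c) * l1Dist a.1 b.1
              + Lpg * l1Dist a.1 b.1 + Lpl * l1Dist a.1 b.1 := hkey
          _ = (1 - (Fintype.card X : ℝ) * c + Lpg + Lpl) * l1Dist a.1 b.1 := by ring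
    set μstar := ContractingWith.fixedPoint S hC with hμstar
    have hfix : S μstar = μstar := hC.fixedPoint_isFixedPt
    refine ⟨μstar.1.ofLp, ⟨μstar.2, ?_⟩, ?_⟩
    · intro y
      exact (congrFun (congrArg (fun s => (Subtype.val s).ofLp) hfix) y).symm
    · rintro μ ⟨hμd, hμe⟩
      have hfp : S ⟨WithLp.toLp 1 (μ : X → ℝ), hμd⟩ = ⟨WithLp.toLp 1 (μ : X → ℝ), hμd⟩ :=
        Subtype.ext (congrArg (WithLp.toLp 1) (funext fun y => (hμe y).symm))
      have := hC.fixedPoint_unique hfp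
      exact congrArg (fun s => (Subtype.val s).ofLp) this
  refine ⟨?_, part2, part3⟩
  -- Part 1
  obtain ⟨μs, ⟨hμsd, hμse⟩, hμsu⟩ := part3
  refine ⟨(μs, μs), ⟨⟨hμsd, hμsd⟩, hμse, hμse⟩, ?_⟩
  rintro ⟨ν, μ⟩ ⟨⟨hν, hμ⟩, h1, h2⟩
  have hνμ : ν = μ := part2 ν μ hν hμ h1 h2
  subst hνμ
  have : ν = μs := hμsu ν ⟨hν, h2⟩
  subst this
  rfl
end

section
/- Let α : 𝒳 → 𝒜 be a pure policy. Assume there is c > 0 with p(x'|x,a,μ,μ̃) ≥ c for all x', x, a, μ, μ̃, and assume 2 L_p^{glob} < |𝒳|c and 2 L_p^{loc} < |𝒳|c. Then there exists a unique family consisting of a distribution μ and distributions μ̃^{(x,a)} for each (x,a) ∈ 𝒳 × 𝒜 such that: (i) for every (x,a) and every y, μ̃^{(x,a)}(y) = ∑_{x'≠x} μ̃^{(x,a)}(x') p(y|x',α(x'),μ,μ̃^{(x,a)}) + μ̃^{(x,a)}(x) p(y|x,a,μ,μ̃^{(x,a)}); and (ii) for every x₀ ∈ 𝒳 and every y, μ(y)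 = ∑_{x'} μ(x') p(y|x',α(x'),μ,μ̃^{(x₀,α(x₀))}). Moreover this solution satisfies μ̃^{(x,α(x))} = μ for every x ∈ 𝒳 (in particular μ̃^{(x,α(x))} does not depend on x). -/
set_option linter.unusedSectionVars false


open Finset

section Aux
variable {X : Type*} [Fintype X] [DecidableEq X]

lemma l1Dist_nonneg (μ μ' : X → ℝ) : 0 ≤ l1Dist μ μ' :=
  Finset.sum_nonneg fun _ _ => abs_nonneg _

lemma l1Dist_self (μ : X → ℝ) : l1Dist μ μ = 0 := by
  simp [l1Dist]

lemma l1Dist_triangle (a b c : X → ℝ) : l1Dist a c ≤ l1Dist a b + l1Dist b c := by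
  rw [l1Dist, l1Dist, l1Dist, ← Finset.sum_add_distrib]
  refine Finset.sum_le_sum fun x _ => ?_
  have h : a x - c x = (a x - b x) + (b x - c x) := by ring
  rw [h]; exact abs_add_le _ _

lemma eq_of_l1Dist_nonpos {μ μ' : X → ℝ} (h : l1Dist μ μ' ≤ 0) : μ = μ' := by
  funext x
  have h0 : ∀ y ∈ Finset.univ, (0:ℝ) ≤ |μ y - μ' y| := fun y _ => abs_nonneg _
  have hz := (Finset.sum_eq_zero_iff_of_nonneg h0).mp
    (le_antisymm h (Finset.sum_nonneg h0)) x (Finset.mem_univ x)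
  rwa [abs_eq_zero, sub_eq_zero] at hz

lemma unique_of_contract {k : ℝ} (hk : k < 1) {ν ν' : X → ℝ}
    (h : l1Dist ν ν' ≤ k * l1Dist ν ν') : ν = ν' := by
  apply eq_of_l1Dist_nonpos
  nlinarith [l1Dist_nonneg ν ν']

lemma isDist_comb {ν : X → ℝ} {q : X → X → ℝ} (hν : IsDist ν) (hq : ∀ x, IsDist (q x)) :
    IsDist (fun y => ∑ x, ν x * q x y) := by
  constructor
  · intro y; exact Finset.sum_nonneg fun x _ => mul_nonneg (hν.1 x) ((hq x).1 y)
  · rw [Finset.sum_comm]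
    calc ∑ x, ∑ y, ν x * q x y = ∑ x, ν x * ∑ y, q x y := by
          simp [Finset.mul_sum]
      _ = ∑ x, ν x := by
          refine Finset.sum_congr rfl fun x _ => ?_
          rw [(hq x).2, mul_one]
      _ = 1 := hν.2

lemma comb_contract {c : ℝ} {ν ν' : X → ℝ} (hν : IsDist ν) (hν' : IsDist ν')
    {q : X → X → ℝ} (hq : ∀ x, IsDist (q x)) (hqc : ∀ x y, c ≤ q x y) :
    l1Dist (fun y => ∑ x, ν x * q x y) (fun y => ∑ x, ν' x * q x y)
      ≤ (1 - (Fintype.card X : ℝ) * c) * l1Dist ν ν' := by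
  have hsum : ∑ x, (ν x - ν' x) = 0 := by
    rw [Finset.sum_sub_distrib, hν.2, hν'.2]; ring
  have key : ∀ y, |∑ x, ν x * q x y - ∑ x, ν' x * q x y|
      ≤ ∑ x, |ν x - ν' x| * (q x y - c) := by
    intro y
    have h1 : ∑ x, ν x * q x y - ∑ x, ν' x * q x y = ∑ x, (ν x - ν' x) * (q x y - c) := by
      have h2 : ∑ x, (ν x - ν' x) * (q x y - c)
          = ∑ x, (ν x * q x y - ν' x * q x y) - (∑ x, (ν x - ν' x)) * c := by
        rw [Finset.sum_mul, ← Finset.sum_sub_distrib]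
        exact Finset.sum_congr rfl fun x _ => by ring
      rw [h2, hsum, Finset.sum_sub_distrib]; ring
    rw [h1]
    calc |∑ x, (ν x - ν' x) * (q x y - c)| ≤ ∑ x, |(ν x - ν' x) * (q x y - c)| :=
          Finset.abs_sum_le_sum_abs _ _
      _ ≤ ∑ x, |ν x - ν' x| * (q x y - c) := by
          refine Finset.sum_le_sum fun x _ => ?_
          rw [abs_mul, abs_of_nonneg (sub_nonneg.mpr (hqc x y))]
  calc l1Dist (fun y => ∑ x, ν x * q x y) (fun y => ∑ x, ν' x * q x y)
      ≤ ∑ y, ∑ x, |ν x - ν' x| * (q x y - c) := Finset.sum_le_sum fun y _ => key y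
    _ = ∑ x, |ν x - ν' x| * (1 - (Fintype.card X : ℝ) * c) := by
        rw [Finset.sum_comm]
        refine Finset.sum_congr rfl fun x _ => ?_
        rw [← Finset.mul_sum, Finset.sum_sub_distrib, (hq x).2, Finset.sum_const,
          Finset.card_univ, nsmul_eq_mul]
    _ = (1 - (Fintype.card X : ℝ) * c) * l1Dist ν ν' := by
        rw [l1Dist, Finset.mul_sum]
        exact Finset.sum_congr rfl fun x _ => mul_comm _ _

lemma comb_perturb {ν : X → ℝ} (hν : IsDist ν) {q r : X → X → ℝ} {B : ℝ}
    (hB : ∀ x, l1Dist (q x) (r x) ≤ B) :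
    l1Dist (fun y => ∑ x, ν x * q x y) (fun y => ∑ x, ν x * r x y) ≤ B := by
  calc l1Dist (fun y => ∑ x, ν x * q x y) (fun y => ∑ x, ν x * r x y)
      = ∑ y, |∑ x, ν x * (q x y - r x y)| := by
        refine Finset.sum_congr rfl fun y _ => ?_
        rw [← Finset.sum_sub_distrib]
        congr 1
        exact Finset.sum_congr rfl fun x _ => by ring
    _ ≤ ∑ y, ∑ x, ν x * |q x y - r x y| := by
        refine Finset.sum_le_sum fun y _ => ?_
        calc |∑ x, ν x * (q x y - r x y)| ≤ ∑ x, |ν x * (q x y - r x y)| :=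
              Finset.abs_sum_le_sum_abs _ _
          _ = ∑ x, ν x * |q x y - r x y| := by
              refine Finset.sum_congr rfl fun x _ => ?_
              rw [abs_mul, abs_of_nonneg (hν.1 x)]
    _ = ∑ x, ν x * l1Dist (q x) (r x) := by
        rw [Finset.sum_comm]
        refine Finset.sum_congr rfl fun x _ => ?_
        rw [l1Dist, Finset.mul_sum]
    _ ≤ ∑ x, ν x * B := Finset.sum_le_sum fun x _ => mul_le_mul_of_nonneg_left (hB x) (hν.1 x)
    _ = B := by rw [← Finset.sum_mul, hν.2, one_mul]

end Aux

/-- The `(x,a)`-modified one-step kernel. -/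
def Kmat {X A : Type*} [Fintype X] [DecidableEq X]
    (p : X → A → (X → ℝ) → (X → ℝ) → X → ℝ) (α : X → A)
    (x : X) (a : A) (μ ν : X → ℝ) : X → X → ℝ :=
  fun x' => if x' = x then p x a μ ν else p x' (α x') μ ν

/-- One step of the `(x,a)`-modified evolution. -/
def Tmap {X A : Type*} [Fintype X] [DecidableEq X]
    (p : X → A → (X → ℝ) → (X → ℝ) → X → ℝ) (α : X → A)
    (x : X) (a : A) (μ ν : X → ℝ) : X → ℝ :=
  fun y => ∑ x', ν x' * Kmat p α x a μ ν x' y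

/-- The pure-policy stationarity system for a global distribution `s.1` and a family of local
distributions `s.2 x a`:
(i) `μ̃^{(x,a)}(y) = ∑_{x'≠x} μ̃^{(x,a)}(x') p(y|x',α(x'),μ,μ̃^{(x,a)})
      + μ̃^{(x,a)}(x) p(y|x,a,μ,μ̃^{(x,a)})`;
(ii) `μ(y) = ∑_{x'} μ(x') p(y|x',α(x'),μ,μ̃^{(x₀,α(x₀))})` for every `x₀`. -/
def StatSystem {X A : Type*} [Fintype X] [DecidableEq X]
    (p : X → A → (X → ℝ) → (X → ℝ) → X → ℝ) (α : X → A)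
    (s : (X → ℝ) × (X → A → (X → ℝ))) : Prop :=
  (IsDist s.1 ∧ ∀ x a, IsDist (s.2 x a)) ∧
  (∀ x a y, s.2 x a y =
      (∑ x' ∈ Finset.univ.erase x, s.2 x a x' * p x' (α x') s.1 (s.2 x a) y)
        + s.2 x a x * p x a s.1 (s.2 x a) y) ∧
  (∀ x₀ y, s.1 y = ∑ x', s.1 x' * p x' (α x') s.1 (s.2 x₀ (α x₀)) y)

/-- for a pure policy `α`, under a uniform lower bound `c > 0` on the kernel and
`2 L_p^glob < |𝒳|c`, `2 L_p^loc < |𝒳|c`, there is a unique family `(μ, (μ̃^{(x,a)})_{x,a})`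
solving the stationarity system, and it satisfies `μ̃^{(x,α(x))} = μ` for every `x`. -/
theorem pure_policy_stationary_family
    {X A : Type*} [Fintype X] [Fintype A] [Nonempty X] [Nonempty A] [DecidableEq X]
    (p : X → A → (X → ℝ) → (X → ℝ) → X → ℝ)
    (Lpg Lpl : ℝ) (hLpg : 0 ≤ Lpg) (hLpl : 0 ≤ Lpl)
    (hp : ∀ x a μ μt, IsDist μ → IsDist μt → IsDist (p x a μ μt))
    (hpglob : ∀ x a μ μ' μt, IsDist μ → IsDist μ' → IsDist μt →
      l1Dist (p x a μ μt) (p x a μ' μt) ≤ Lpg * l1Dist μ μ')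
    (hploc : ∀ x a μ μt μt', IsDist μ → IsDist μt → IsDist μt' →
      l1Dist (p x a μ μt) (p x a μ μt') ≤ Lpl * l1Dist μt μt')
    (c : ℝ) (hc : 0 < c)
    (hlow : ∀ (x' x : X) (a : A) (μ μt : X → ℝ), IsDist μ → IsDist μt →
      c ≤ p x a μ μt x')
    (hg : 2 * Lpg < (Fintype.card X : ℝ) * c)
    (hl : 2 * Lpl < (Fintype.card X : ℝ) * c)
    (α : X → A) :
    ∃ s : (X → ℝ) × (X → A → (X → ℝ)), StatSystem p α s ∧
      (∀ s' : (X → ℝ) × (X → A → (X → ℝ)), StatSystem p α s' → s' = s) ∧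
      (∀ x, s.2 x (α x) = s.1) := by
  classical
  set N : ℝ := (Fintype.card X : ℝ) with hNdef
  have hN0 : 0 < N := by
    rw [hNdef]; exact_mod_cast Fintype.card_pos
  have hu : IsDist (fun _ : X => N⁻¹) := by
    constructor
    · intro _; positivity
    · rw [Finset.sum_const, Finset.card_univ, nsmul_eq_mul, ← hNdef,
        mul_inv_cancel₀ (ne_of_gt hN0)]
  set xh : X := Classical.arbitrary X with hxh
  set ah : A := Classical.arbitrary A with hah
  have hNc1 : N * c ≤ 1 := by
    have hd := hp xh ah _ _ hu hu
    calc N * c = ∑ _y : X, c := by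
          rw [Finset.sum_const, Finset.card_univ, nsmul_eq_mul, ← hNdef]
      _ ≤ ∑ y, p xh ah (fun _ : X => N⁻¹) (fun _ : X => N⁻¹) y :=
          Finset.sum_le_sum fun y _ => hlow y xh ah _ _ hu hu
      _ = 1 := hd.2
  have hNc0 : 0 < N * c := mul_pos hN0 hc
  have hLpl' : Lpl < N * c := by linarith
  have hLpg' : Lpg < N * c := by linarith
  -- kernel facts
  have hKrow : ∀ (x : X) (a : A) (μ ν : X → ℝ), IsDist μ → IsDist ν →
      ∀ x', IsDist (Kmat p α x a μ ν x') := by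
    intro x a μ ν hμ hν x'
    unfold Kmat
    split
    · exact hp _ _ _ _ hμ hν
    · exact hp _ _ _ _ hμ hν
  have hKlow : ∀ (x : X) (a : A) (μ ν : X → ℝ), IsDist μ → IsDist ν →
      ∀ x' y, c ≤ Kmat p α x a μ ν x' y := by
    intro x a μ ν hμ hν x' y
    unfold Kmat
    split
    · exact hlow y x a μ ν hμ hν
    · exact hlow y x' (α x') μ ν hμ hν
  have hTdist : ∀ (x : X) (a : A) (μ ν : X → ℝ), IsDist μ → IsDist ν →
      IsDist (Tmap p α x a μ ν) :=
    fun x a μ ν hμ hν => isDist_comb hν (hKrow x a μ ν hμ hν)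
  -- the main contraction estimate
  have hE1 : ∀ (x : X) (a : A) (μ μ' ν ν' : X → ℝ),
      IsDist μ → IsDist μ' → IsDist ν → IsDist ν' →
      l1Dist (Tmap p α x a μ ν) (Tmap p α x a μ' ν')
        ≤ (1 - N * c + Lpl) * l1Dist ν ν' + Lpg * l1Dist μ μ' := by
    intro x a μ μ' ν ν' hμ hμ' hν hν'
    have t1 : l1Dist (Tmap p α x a μ ν)
        (fun y => ∑ x', ν' x' * Kmat p α x a μ ν x' y)
        ≤ (1 - N * c) * l1Dist ν ν' :=
      comb_contract hν hν' (hKrow x a μ ν hμ hν) (hKlow x a μ ν hμ hν)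
    have t2 : l1Dist (fun y => ∑ x', ν' x' * Kmat p α x a μ ν x' y)
        (Tmap p α x a μ' ν')
        ≤ Lpg * l1Dist μ μ' + Lpl * l1Dist ν ν' := by
      refine comb_perturb hν' fun x' => ?_
      have hrow1 : l1Dist (Kmat p α x a μ ν x') (Kmat p α x a μ' ν x')
          ≤ Lpg * l1Dist μ μ' := by
        unfold Kmat
        split
        · exact hpglob x a μ μ' ν hμ hμ' hν
        · exact hpglob x' (α x') μ μ' ν hμ hμ' hν
      have hrow2 : l1Dist (Kmat p α x a μ' ν x') (Kmat p α x a μ' ν' x')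
          ≤ Lpl * l1Dist ν ν' := by
        unfold Kmat
        split
        · exact hploc x a μ' ν ν' hμ' hν hν'
        · exact hploc x' (α x') μ' ν ν' hμ' hν hν'
      calc l1Dist (Kmat p α x a μ ν x') (Kmat p α x a μ' ν' x')
          ≤ l1Dist (Kmat p α x a μ ν x') (Kmat p α x a μ' ν x')
            + l1Dist (Kmat p α x a μ' ν x') (Kmat p α x a μ' ν' x') :=
            l1Dist_triangle _ _ _
        _ ≤ Lpg * l1Dist μ μ' + Lpl * l1Dist ν ν' := add_le_add hrow1 hrow2
    calc l1Dist (Tmap p α x a μ ν) (Tmap p α x a μ' ν')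
        ≤ l1Dist (Tmap p α x a μ ν) (fun y => ∑ x', ν' x' * Kmat p α x a μ ν x' y)
          + l1Dist (fun y => ∑ x', ν' x' * Kmat p α x a μ ν x' y) (Tmap p α x a μ' ν') :=
          l1Dist_triangle _ _ _
      _ ≤ (1 - N * c) * l1Dist ν ν' + (Lpg * l1Dist μ μ' + Lpl * l1Dist ν ν') :=
          add_le_add t1 t2
      _ = (1 - N * c + Lpl) * l1Dist ν ν' + Lpg * l1Dist μ μ' := by ring
  -- diagonal collapse
  have hKdiag : ∀ (x : X) (μ ν : X → ℝ),
      Kmat p α x (α x) μ ν = fun x' => p x' (α x') μ ν := by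
    intro x μ ν
    funext x'
    unfold Kmat
    split
    · next h => subst h; rfl
    · rfl
  have hTdiag : ∀ (x : X) (μ ν : X → ℝ),
      Tmap p α x (α x) μ ν = fun y => ∑ x', ν x' * p x' (α x') μ ν y := by
    intro x μ ν
    unfold Tmap
    rw [hKdiag]
  have hkT : 1 - N * c + Lpl < 1 := by linarith
  have hkT0 : 0 ≤ 1 - N * c + Lpl := by linarith
  have hkG : 1 - N * c + Lpl + Lpg < 1 := by linarith
  have hkG0 : 0 ≤ 1 - N * c + Lpl + Lpg := by linarith
  -- uniqueness of fixed points of Tmap for a fixed μ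
  have hTuniq : ∀ (x : X) (a : A) (μ ν ν' : X → ℝ), IsDist μ → IsDist ν → IsDist ν' →
      Tmap p α x a μ ν = ν → Tmap p α x a μ ν' = ν' → ν = ν' := by
    intro x a μ ν ν' hμ hν hν' h1 h2
    have h := hE1 x a μ μ ν ν' hμ hμ hν hν'
    rw [h1, h2, l1Dist_self, mul_zero, add_zero] at h
    exact unique_of_contract hkT h
  -- Banach fixed point setup
  let E := PiLp 1 (fun _ : X => ℝ)
  have hdist : ∀ μ ν : E, dist μ ν = l1Dist μ ν := by
    intro μ ν
    rw [PiLp.dist_eq_sum (by norm_num : (0:ℝ) < ENNReal.toReal 1)]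
    simp [Real.dist_eq, l1Dist]
  have hev : ∀ x : X, Continuous (fun μ : E => μ x) := fun x =>
    (continuous_apply x).comp (PiLp.continuous_ofLp 1 (fun _ : X => ℝ))
  have hclosed : IsClosed {μ : E | IsDist μ} := by
    have h1 : IsClosed {μ : E | ∀ x, 0 ≤ μ x} := by
      rw [Set.setOf_forall]
      exact isClosed_iInter fun x => isClosed_le continuous_const (hev x)
    have h2 : IsClosed {μ : E | ∑ x, μ x = 1} :=
      isClosed_eq (continuous_finset_sum _ fun x _ => hev x) continuous_const
    exact h1.inter h2
  haveI : CompleteSpace {μ : E | IsDist μ} := hclosed.completeSpace_coe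
  haveI : Nonempty {μ : E | IsDist μ} := ⟨⟨WithLp.toLp 1 (fun _ : X => N⁻¹), hu⟩⟩
  -- the diagonal map G
  let GD : {μ : E | IsDist μ} → {μ : E | IsDist μ} :=
    fun μ => ⟨WithLp.toLp 1 (Tmap p α xh (α xh) μ.1 μ.1), hTdist xh (α xh) μ.1 μ.1 μ.2 μ.2⟩
  have hGlip : ∀ μ ν : {μ : E | IsDist μ},
      dist (GD μ) (GD ν) ≤ (1 - N * c + Lpl + Lpg) * dist μ ν := by
    intro μ ν
    simp only [Subtype.dist_eq, hdist]
    calc l1Dist (GD μ).1 (GD ν).1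
        ≤ (1 - N * c + Lpl) * l1Dist μ.1 ν.1 + Lpg * l1Dist μ.1 ν.1 :=
          hE1 xh (α xh) μ.1 ν.1 μ.1 ν.1 μ.2 ν.2 μ.2 ν.2
      _ = (1 - N * c + Lpl + Lpg) * l1Dist μ.1 ν.1 := by ring
  have hG : ContractingWith (Real.toNNReal (1 - N * c + Lpl + Lpg)) GD := by
    constructor
    · rw [← Real.toNNReal_one]
      exact (Real.toNNReal_lt_toNNReal_iff one_pos).mpr hkG
    · refine LipschitzWith.of_dist_le_mul fun a b => ?_
      rw [Real.coe_toNNReal _ hkG0]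
      exact hGlip a b
  set μstar := ContractingWith.fixedPoint GD hG with hμstardef
  have hμstarfix : GD μstar = μstar := hG.fixedPoint_isFixedPt
  have hμs : IsDist (μstar.1 : X → ℝ) := μstar.2
  have hGfix : Tmap p α xh (α xh) μstar.1 μstar.1 = μstar.1 :=
    congrArg (fun m => WithLp.ofLp (Subtype.val m)) hμstarfix
  have hGfix' : ∀ x : X, Tmap p α x (α x) μstar.1 μstar.1 = μstar.1 := by
    intro x
    rw [hTdiag, ← hTdiag xh, hGfix]
  -- the (x,a)-maps
  let TD : X → A → ({μ : E | IsDist μ} → {μ : E | IsDist μ}) :=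
    fun x a ν => ⟨WithLp.toLp 1 (Tmap p α x a μstar.1 ν.1), hTdist x a μstar.1 ν.1 hμs ν.2⟩
  have hT : ∀ (x : X) (a : A), ContractingWith (Real.toNNReal (1 - N * c + Lpl)) (TD x a) := by
    intro x a
    constructor
    · rw [← Real.toNNReal_one]
      exact (Real.toNNReal_lt_toNNReal_iff one_pos).mpr hkT
    · refine LipschitzWith.of_dist_le_mul fun ν ν' => ?_
      rw [Real.coe_toNNReal _ hkT0]
      simp only [Subtype.dist_eq, hdist]
      have h := hE1 x a μstar.1 μstar.1 ν.1 ν'.1 hμs hμs ν.2 ν'.2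
      rw [l1Dist_self, mul_zero, add_zero] at h
      exact h
  set nu : X → A → {μ : E | IsDist μ} :=
    fun x a => ContractingWith.fixedPoint (TD x a) (hT x a) with hnudef
  have hnufix : ∀ (x : X) (a : A), Tmap p α x a μstar.1 (nu x a).1 = (nu x a).1 :=
    fun x a => congrArg (fun m => WithLp.ofLp (Subtype.val m)) ((hT x a).fixedPoint_isFixedPt)
  have hnud : ∀ (x : X) (a : A), IsDist ((nu x a).1 : X → ℝ) := fun x a => (nu x a).2
  have hdiag : ∀ x : X, ((nu x (α x)).1 : X → ℝ) = μstar.1 :=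
    fun x => hTuniq x (α x) μstar.1 _ _ hμs (hnud x (α x)) hμs
      (hnufix x (α x)) (hGfix' x)
  -- conversion between Tmap and the stationarity equations
  have hconv : ∀ (x : X) (a : A) (μ ν : X → ℝ) (y : X),
      Tmap p α x a μ ν y =
        (∑ x' ∈ Finset.univ.erase x, ν x' * p x' (α x') μ ν y) + ν x * p x a μ ν y := by
    intro x a μ ν y
    show ∑ x', ν x' * Kmat p α x a μ ν x' y = _
    rw [← Finset.sum_erase_add _ _ (Finset.mem_univ x)]
    congr 1
    · refine Finset.sum_congr rfl fun x' hx' => ?_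
      have hne : x' ≠ x := (Finset.mem_erase.mp hx').1
      simp only [Kmat, if_neg hne]
    · simp [Kmat]
  refine ⟨((μstar.1 : X → ℝ), fun x a => ((nu x a).1 : X → ℝ)), ?_, ?_, ?_⟩
  · -- StatSystem holds
    refine ⟨⟨hμs, fun x a => hnud x a⟩, ?_, ?_⟩
    · intro x a y
      rw [← hconv x a μstar.1 ((nu x a).1) y, hnufix x a]
    · intro x₀ y
      show (μstar.1 : X → ℝ) y = ∑ x', μstar.1 x' * p x' (α x') μstar.1 ((nu x₀ (α x₀)).1) y
      rw [hdiag x₀]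
      have h5 := hGfix' x₀
      rw [hTdiag] at h5
      exact (congrFun h5 y).symm
  · -- uniqueness
    rintro ⟨μ2, ρ2⟩ hS'
    obtain ⟨⟨hd1, hd2⟩, hi, hii⟩ := hS'
    have ha : ∀ (x : X) (a : A), Tmap p α x a μ2 (ρ2 x a) = ρ2 x a := by
      intro x a
      funext y
      rw [hconv]
      exact (hi x a y).symm
    have hb : μ2 = ρ2 xh (α xh) := by
      have hst1 : (fun y => ∑ x', μ2 x' * p x' (α x') μ2 (ρ2 xh (α xh)) y) = μ2 :=
        funext fun y => (hii xh y).symm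
      have hst2 : (fun y => ∑ x', ρ2 xh (α xh) x' * p x' (α x') μ2 (ρ2 xh (α xh)) y)
          = ρ2 xh (α xh) := by
        rw [← hTdiag xh]
        exact ha xh (α xh)
      have hcc := comb_contract hd1 (hd2 xh (α xh))
        (fun x' => hp x' (α x') μ2 (ρ2 xh (α xh)) hd1 (hd2 xh (α xh)))
        (fun x' y => hlow y x' (α x') μ2 (ρ2 xh (α xh)) hd1 (hd2 xh (α xh)))
      rw [hst1, hst2] at hcc
      exact unique_of_contract (by linarith : 1 - N * c < 1) hcc
    have hc' : μ2 = (μstar.1 : X → ℝ) := by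
      have hst1 : (fun y => ∑ x', μ2 x' * p x' (α x') μ2 (ρ2 xh (α xh)) y) = μ2 :=
        funext fun y => (hii xh y).symm
      rw [← hb] at hst1
      have h1 : Tmap p α xh (α xh) μ2 μ2 = μ2 := (hTdiag xh μ2 μ2).trans hst1
      have h := hE1 xh (α xh) μ2 μstar.1 μ2 μstar.1 hd1 hμs hd1 hμs
      rw [h1, hGfix] at h
      exact unique_of_contract hkG (h.trans_eq (by ring))
    have hd' : ∀ (x : X) (a : A), ρ2 x a = ((nu x a).1 : X → ℝ) := by
      intro x a
      have h2 := ha x a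
      rw [hc'] at h2
      exact hTuniq x a μstar.1 _ _ hμs (hd2 x a) (hnud x a) h2 (hnufix x a)
    simp only [Prod.mk.injEq]
    exact ⟨hc', funext fun x => funext fun a => hd' x a⟩
  · -- diagonal property
    intro x
    exact hdiag x
end

section
/- Let 0 < p < 1/2, γ ∈ (0,1), c_g > 0 and c_l > 2γ. In the two-state example, define the distributions μ* = (p, 1−p), μ̃^{(0,s)} = μ̃^{(1,m)} = (1/2, 1/2), μ̃^{(0,m)} = μ̃^{(1,s)} = (p, 1−p) (listing the weights of states 0 and 1), and define the Q-table Q* by: Q*(0,m) = (c_g p + c_l p − γ p + γ)/(1−γ), Q*(1,s) = Q*(0,m) + 1, Q*(0,s) = c_g p/(1−γ) + c_l/2 + γ (c_l p − 2γ p + γ + p)/(1−γ), Q*(1,m) = Q*(0,s) + 1. Then: (i) Q* satisfies the Bellman system Q*(x,a) = f(x,a,μ*,μ̃^{(x,a)}) + γ ∑_{x'∈{0,1}} p(x'|x,a) · min_{a'∈{s,m}} Q*(x',a') for all (x,a) ∈ {0,1} × {s,m}; (ii) Q*(0,s) − Q*(0,m) = Q*(1,m) − Q*(1,s) = (1/2)(1−2p)(c_l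 − 2γ) > 0, so the unique argmin policy is α*(0) = m, α*(1) = s; and (iii) μ* is the unique stationary distribution under α*, i.e. μ*(y) = ∑_{x} μ*(x) p(y|x,α*(x)) for y ∈ {0,1}. -/
open Finset

/-! Two-state example: states `𝒳 = Fin 2`, actions `𝒜 = Bool` where `false` = stay (`s`)
and `true` = move (`m`). -/

/-- Target of action `a` at state `x`: `s(x) = x`, `m(x) = 1 − x`. -/
def target (a : Bool) (x : Fin 2) : Fin 2 := if a then 1 - x else x

/-- Transition kernel: `p(x'|x,a) = 1 − p` if `x' = a(x)` and `p` otherwise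
(it does not depend on the population distributions). -/
noncomputable def ker (p : ℝ) (x : Fin 2) (a : Bool) (x' : Fin 2) : ℝ :=
  if x' = target a x then 1 - p else p

/-- Running cost `f(x,a,μ,μ̃) = x + c_g μ(0) + c_l μ̃(0)`. -/
noncomputable def cost (cg cl : ℝ) (x : Fin 2) (_a : Bool) (μ μt : Fin 2 → ℝ) : ℝ :=
  (x : ℕ) + cg * μ 0 + cl * μt 0

/-- The distribution `μ* = (p, 1−p)`. -/
noncomputable def μstar (p : ℝ) : Fin 2 → ℝ := fun x => if x = 0 then p else 1 - p

/-- The local distributions: `μ̃^{(0,s)} = μ̃^{(1,m)} = (1/2, 1/2)` and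
`μ̃^{(0,m)} = μ̃^{(1,s)} = (p, 1−p)`. -/
noncomputable def mtil (p : ℝ) (x : Fin 2) (a : Bool) : Fin 2 → ℝ :=
  if (x = 0 ∧ a = false) ∨ (x = 1 ∧ a = true) then (fun _ => (1 : ℝ) / 2) else μstar p

/-- The Q-table `Q*` of the two-state example. -/
noncomputable def Qstar (p γ cg cl : ℝ) (x : Fin 2) (a : Bool) : ℝ :=
  if x = 0 then
    (if a then (cg * p + cl * p - γ * p + γ) / (1 - γ)
     else cg * p / (1 - γ) + cl / 2 + γ * (cl * p - 2 * γ * p + γ + p) / (1 - γ))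
  else
    (if a then (cg * p / (1 - γ) + cl / 2 + γ * (cl * p - 2 * γ * p + γ + p) / (1 - γ)) + 1
     else (cg * p + cl * p - γ * p + γ) / (1 - γ) + 1)

/-- The optimal pure policy `α*(0) = m`, `α*(1) = s`. -/
def αstar (x : Fin 2) : Bool := decide (x = 0)

/-- in the two-state example with `0 < p < 1/2`, `γ ∈ (0,1)`, `c_g > 0` and
`c_l > 2γ`:
(i) `Q*` solves the Bellman system for `(μ*, (μ̃^{(x,a)}))`;
(ii) `Q*(0,s) − Q*(0,m) = Q*(1,m) − Q*(1,s) = (1/2)(1−2p)(c_l − 2γ) > 0`, so the unique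
argmin policy is `α*(0) = m`, `α*(1) = s`;
(iii) `μ*` is the unique stationary distribution under `α*`. -/
theorem two_state_example (p γ cg cl : ℝ)
    (hp0 : 0 < p) (hp1 : p < 1 / 2) (hγ0 : 0 < γ) (hγ1 : γ < 1)
    (hcg : 0 < cg) (hcl : 2 * γ < cl) :
    -- (i) the Bellman system
    (∀ (x : Fin 2) (a : Bool), Qstar p γ cg cl x a =
      cost cg cl x a (μstar p) (mtil p x a) +
        γ * ∑ x', ker p x a x' *
          min (Qstar p γ cg cl x' false) (Qstar p γ cg cl x' true)) ∧
    -- (ii) the action gap and the unique argmin policy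
    (Qstar p γ cg cl 0 false - Qstar p γ cg cl 0 true
        = (1 / 2) * (1 - 2 * p) * (cl - 2 * γ) ∧
      Qstar p γ cg cl 1 true - Qstar p γ cg cl 1 false
        = (1 / 2) * (1 - 2 * p) * (cl - 2 * γ) ∧
      0 < (1 / 2) * (1 - 2 * p) * (cl - 2 * γ) ∧
      Qstar p γ cg cl 0 true < Qstar p γ cg cl 0 false ∧
      Qstar p γ cg cl 1 false < Qstar p γ cg cl 1 true) ∧
    -- (iii) `μ*` is the unique stationary distribution under `α*`
    ((∀ y, μstar p y = ∑ x, μstar p x * ker p x (αstar x) y) ∧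
      ∀ ν : Fin 2 → ℝ, IsDist ν →
        (∀ y, ν y = ∑ x, ν x * ker p x (αstar x) y) → ν = μstar p) := by
  have hγ : (1:ℝ) - γ ≠ 0 := by linarith
  have hgap : (0:ℝ) < (1 / 2) * (1 - 2 * p) * (cl - 2 * γ) := by nlinarith
  have h0 : Qstar p γ cg cl 0 false - Qstar p γ cg cl 0 true
      = (1 / 2) * (1 - 2 * p) * (cl - 2 * γ) := by
    simp only [Qstar, if_true, Bool.false_eq_true, if_false]
    field_simp
    ring
  have h1 : Qstar p γ cg cl 1 true - Qstar p γ cg cl 1 false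
      = (1 / 2) * (1 - 2 * p) * (cl - 2 * γ) := by
    simp only [Qstar]
    norm_num
    field_simp
    ring
  have hmin0 : min (Qstar p γ cg cl 0 false) (Qstar p γ cg cl 0 true)
      = Qstar p γ cg cl 0 true := min_eq_right (by linarith)
  have hmin1 : min (Qstar p γ cg cl 1 false) (Qstar p γ cg cl 1 true)
      = Qstar p γ cg cl 1 false := min_eq_left (by linarith)
  refine ⟨?_, ⟨h0, h1, hgap, by linarith, by linarith⟩, ?_, ?_⟩
  · intro x a
    fin_cases x <;> cases a <;>
      simp only [Fin.sum_univ_two, Fin.isValue, hmin0, hmin1] <;>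
      simp [Qstar, cost, ker, mtil, μstar, target, Fin.ext_iff] <;>
      field_simp <;> ring
  · intro y
    fin_cases y <;>
      simp [Fin.sum_univ_two, μstar, ker, αstar, target] <;> ring
  · rintro ν ⟨hpos, hsum⟩ hstat
    have hs : ν 0 + ν 1 = 1 := by simpa [Fin.sum_univ_two] using hsum
    have h0' := hstat 0
    simp [Fin.sum_univ_two, ker, αstar, target] at h0'
    funext y
    fin_cases y <;> simp [μstar, Fin.ext_iff] <;> nlinarith [hstat 0]
end
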